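/- Under a balanced ranked set sample with consistent rankings and true AUC δ₀, the expectation of the pooled variance estimator satisfies E[S²] = Var((mknl/(mk+nl))^{1/2}(δ̂_BRSS − δ₀)) + (δ₀ − δ̄₀² − (β̄ − δ̄₀²) − (ᾱ − δ̄₀²))/(mk + nl). -/

import Mathlib

open MeasureTheory ProbabilityTheory Filter Finset Topology BoundedContinuousFunction

noncomputable section

namespace RSSAUC

/-- `φ(x,y) = 1` if `x < y` and `0` otherwise. -/
def phi (x y : ℝ) : ℝ := if x < y then 1 else 0

variable {Ω : Type*} [MeasurableSpace Ω]

/-- The CDF of a random variable `Z` under the probability measure `P`. -/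
def cdfOf (P : Measure Ω) (Z : Ω → ℝ) (t : ℝ) : ℝ := (P {ω | Z ω ≤ t}).toReal

/-- The CDF of a measure on `ℝ`. -/
def cdfM (μ : Measure ℝ) (t : ℝ) : ℝ := (μ (Set.Iic t)).toReal

/-- `P(W < Z)` for independent `W ~ μ` and `Z ~ ν`. -/
def probLT (μ ν : Measure ℝ) : ℝ := ((μ.prod ν) {p : ℝ × ℝ | p.1 < p.2}).toReal

/-- A balanced ranked set sample (BRSS) with consistent rankings: `X [i]j` (`i = 1,…,m`,
`j = 1,…,k`) and `Y [r]s` (`r = 1,…,n`, `s = 1,…,l`) are mutually independent; within the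
`i`-th (resp. `r`-th) stratum the `X` (resp. `Y`) variables share a common CDF `Fi i`
(resp. `Gr r`), and the continuous population CDFs satisfy `F = (1/m) ∑ᵢ Fi i` and
`G = (1/n) ∑ᵣ Gr r`. -/
structure IsBRSS (P : Measure Ω) (F G : ℝ → ℝ) {m n k l : ℕ}
    (Fi : Fin m → ℝ → ℝ) (Gr : Fin n → ℝ → ℝ)
    (X : Fin m → Fin k → Ω → ℝ) (Y : Fin n → Fin l → Ω → ℝ) : Prop where
  hm : 1 ≤ m
  hn : 1 ≤ n
  hk : 1 < k
  hl : 1 < l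
  contF : Continuous F
  contG : Continuous G
  meas_X : ∀ i j, Measurable (X i j)
  meas_Y : ∀ r s, Measurable (Y r s)
  indep : iIndepFun
      (Sum.elim (fun p : Fin m × Fin k => X p.1 p.2) (fun p : Fin n × Fin l => Y p.1 p.2)) P
  cdf_X : ∀ i j t, cdfOf P (X i j) t = Fi i t
  cdf_Y : ∀ r s t, cdfOf P (Y r s) t = Gr r t
  F_avg : ∀ t, F t = (∑ i, Fi i t) / m
  G_avg : ∀ t, G t = (∑ r, Gr r t) / n

/-- An unbalanced ranked set sample (URSS) with consistent rankings. -/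
structure IsURSS (P : Measure Ω) (F G : ℝ → ℝ) {m n : ℕ} {k : Fin m → ℕ} {l : Fin n → ℕ}
    (Fi : Fin m → ℝ → ℝ) (Gr : Fin n → ℝ → ℝ)
    (X : ∀ i, Fin (k i) → Ω → ℝ) (Y : ∀ r, Fin (l r) → Ω → ℝ) : Prop where
  hm : 1 ≤ m
  hn : 1 ≤ n
  hk : ∀ i, 1 < k i
  hl : ∀ r, 1 < l r
  contF : Continuous F
  contG : Continuous G
  meas_X : ∀ i j, Measurable (X i j)
  meas_Y : ∀ r s, Measurable (Y r s)
  indep : iIndepFun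
      (Sum.elim (fun p : Σ i, Fin (k i) => X p.1 p.2) (fun p : Σ r, Fin (l r) => Y p.1 p.2)) P
  cdf_X : ∀ i j t, cdfOf P (X i j) t = Fi i t
  cdf_Y : ∀ r s t, cdfOf P (Y r s) t = Gr r t
  F_avg : ∀ t, F t = (∑ i, Fi i t) / m
  G_avg : ∀ t, G t = (∑ r, Gr r t) / n

/-- Mann–Whitney statistic for BRSS data. -/
def deltaHatB {m n k l : ℕ} (X : Fin m → Fin k → Ω → ℝ) (Y : Fin n → Fin l → Ω → ℝ)
    (ω : Ω) : ℝ :=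
  (∑ i, ∑ j, ∑ r, ∑ s, phi (X i j ω) (Y r s ω)) / (m * k * n * l)

/-- Estimated placement value `Û_{rs}` for BRSS data. -/
def UhatB {m n k l : ℕ} (X : Fin m → Fin k → Ω → ℝ) (Y : Fin n → Fin l → Ω → ℝ)
    (r : Fin n) (s : Fin l) (ω : Ω) : ℝ :=
  1 - (∑ i, ∑ j, phi (X i j ω) (Y r s ω)) / (m * k)

/-- `V¹⁰(X_{[i]j})` for BRSS data. -/
def V10B {m n k l : ℕ} (X : Fin m → Fin k → Ω → ℝ) (Y : Fin n → Fin l → Ω → ℝ)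
    (i : Fin m) (j : Fin k) (ω : Ω) : ℝ :=
  (∑ r, ∑ s, phi (X i j ω) (Y r s ω)) / (n * l)

/-- `V⁰¹(Y_{[r]s})` for BRSS data. -/
def V01B {m n k l : ℕ} (X : Fin m → Fin k → Ω → ℝ) (Y : Fin n → Fin l → Ω → ℝ)
    (r : Fin n) (s : Fin l) (ω : Ω) : ℝ :=
  (∑ i, ∑ j, phi (X i j ω) (Y r s ω)) / (m * k)

/-- `(S¹⁰)²` for BRSS data. -/
def S10sqB {m n k l : ℕ} (X : Fin m → Fin k → Ω → ℝ) (Y : Fin n → Fin l → Ω → ℝ)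
    (ω : Ω) : ℝ :=
  ∑ i, ∑ j, (V10B X Y i j ω - (∑ j', V10B X Y i j' ω) / k) ^ 2 / ((m : ℝ) * ((k : ℝ) - 1))

/-- `(S⁰¹)²` for BRSS data. -/
def S01sqB {m n k l : ℕ} (X : Fin m → Fin k → Ω → ℝ) (Y : Fin n → Fin l → Ω → ℝ)
    (ω : Ω) : ℝ :=
  ∑ r, ∑ s, (V01B X Y r s ω - (∑ s', V01B X Y r s' ω) / l) ^ 2 / ((n : ℝ) * ((l : ℝ) - 1))

/-- Pooled variance estimator `S²` for BRSS data. -/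
def S2B {m n k l : ℕ} (X : Fin m → Fin k → Ω → ℝ) (Y : Fin n → Fin l → Ω → ℝ)
    (ω : Ω) : ℝ :=
  ((n * l : ℝ) * S10sqB X Y ω + (m * k : ℝ) * S01sqB X Y ω) / ((m * k : ℝ) + (n * l : ℝ))

/-- Mann–Whitney statistic for URSS data. -/
def deltaHatU {m n : ℕ} {k : Fin m → ℕ} {l : Fin n → ℕ}
    (X : ∀ i, Fin (k i) → Ω → ℝ) (Y : ∀ r, Fin (l r) → Ω → ℝ) (ω : Ω) : ℝ :=
  ∑ i, ∑ j, ∑ r, ∑ s, phi (X i j ω) (Y r s ω) / (m * k i * n * l r)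

/-- Estimated placement value `Û_{rs}` for URSS data. -/
def UhatU {m n : ℕ} {k : Fin m → ℕ} {l : Fin n → ℕ}
    (X : ∀ i, Fin (k i) → Ω → ℝ) (Y : ∀ r, Fin (l r) → Ω → ℝ)
    (r : Fin n) (s : Fin (l r)) (ω : Ω) : ℝ :=
  1 - ∑ i, ∑ j, phi (X i j ω) (Y r s ω) / (m * k i)

/-- `V¹⁰(X_{[i]j})` for URSS data. -/
def V10U {m n : ℕ} {k : Fin m → ℕ} {l : Fin n → ℕ}
    (X : ∀ i, Fin (k i) → Ω → ℝ) (Y : ∀ r, Fin (l r) → Ω → ℝ)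
    (i : Fin m) (j : Fin (k i)) (ω : Ω) : ℝ :=
  ∑ r, ∑ s, phi (X i j ω) (Y r s ω) / (n * l r)

/-- `V⁰¹(Y_{[r]s})` for URSS data. -/
def V01U {m n : ℕ} {k : Fin m → ℕ} {l : Fin n → ℕ}
    (X : ∀ i, Fin (k i) → Ω → ℝ) (Y : ∀ r, Fin (l r) → Ω → ℝ)
    (r : Fin n) (s : Fin (l r)) (ω : Ω) : ℝ :=
  ∑ i, ∑ j, phi (X i j ω) (Y r s ω) / (m * k i)

/-- `(S¹⁰)²` for URSS data. -/
def S10sqU {m n : ℕ} {k : Fin m → ℕ} {l : Fin n → ℕ}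
    (X : ∀ i, Fin (k i) → Ω → ℝ) (Y : ∀ r, Fin (l r) → Ω → ℝ) (ω : Ω) : ℝ :=
  ∑ i, ∑ j, (V10U X Y i j ω - (∑ j', V10U X Y i j' ω) / (k i)) ^ 2 /
    ((m : ℝ) * ((k i : ℝ) - 1))

/-- `(S⁰¹)²` for URSS data. -/
def S01sqU {m n : ℕ} {k : Fin m → ℕ} {l : Fin n → ℕ}
    (X : ∀ i, Fin (k i) → Ω → ℝ) (Y : ∀ r, Fin (l r) → Ω → ℝ) (ω : Ω) : ℝ :=
  ∑ r, ∑ s, (V01U X Y r s ω - (∑ s', V01U X Y r s' ω) / (l r)) ^ 2 /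
    ((n : ℝ) * ((l r : ℝ) - 1))

/-- Pooled variance estimator `S²` for URSS data, where `n_x = ∑ᵢ kᵢ` and `n_y = ∑ᵣ lᵣ`. -/
def S2U {m n : ℕ} {k : Fin m → ℕ} {l : Fin n → ℕ}
    (X : ∀ i, Fin (k i) → Ω → ℝ) (Y : ∀ r, Fin (l r) → Ω → ℝ) (ω : Ω) : ℝ :=
  ((∑ r, (l r : ℝ)) * S10sqU X Y ω + (∑ i, (k i : ℝ)) * S01sqU X Y ω) /
    ((∑ i, (k i : ℝ)) + (∑ r, (l r : ℝ)))

/-- Convergence in distribution of a sequence of real random variables on `(Ω, P)`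
to a limiting distribution `μ` on `ℝ`: integrals of every bounded continuous function
converge. -/
def TendstoInDistribution (P : Measure Ω) (Z : ℕ → Ω → ℝ) (μ : Measure ℝ) : Prop :=
  ∀ f : ℝ →ᵇ ℝ, Tendsto (fun t => ∫ ω, f (Z t ω) ∂P) atTop (𝓝 (∫ x, f x ∂μ))

/-- Convergence in probability of a sequence of real random variables to a constant. -/
def TendstoInProbability (P : Measure Ω) (Z : ℕ → Ω → ℝ) (c : ℝ) : Prop :=
  ∀ ε > 0, Tendsto (fun t => (P {ω | ε ≤ |Z t ω - c|}).toReal) atTop (𝓝 0)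

/-- `Z t = O_p(a t)`: stochastic boundedness at rate `a`. -/
def IsBigOp (P : Measure Ω) (Z : ℕ → Ω → ℝ) (a : ℕ → ℝ) : Prop :=
  ∀ ε > 0, ∃ M : ℝ, ∀ᶠ t in atTop, (P {ω | M * a t < |Z t ω|}).toReal < ε

/-- The chi-square distribution with one degree of freedom (the gamma distribution with
shape `1/2` and rate `1/2`). -/
def chiSq1 : Measure ℝ := gammaMeasure (1 / 2) (1 / 2)

/-- The standard normal distribution `N(0,1)`. -/
def stdNormal : Measure ℝ := gaussianReal 0 1


/-- `β = ∫ (1 − G(x))² dF(x)`, with `μ` the measure of the non-diseased population. -/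
def betaInt (μ : Measure ℝ) (G : ℝ → ℝ) : ℝ := ∫ x, (1 - G x) ^ 2 ∂μ

/-- `α = ∫ F(x)² dG(x)`, with `ν` the measure of the diseased population. -/
def alphaInt (ν : Measure ℝ) (F : ℝ → ℝ) : ℝ := ∫ x, F x ^ 2 ∂ν

/-- `β̄ = ∫ (1/n) ∑ᵣ (1 − G_{[r]}(x))² dF(x)`. -/
def betaBarInt {n : ℕ} (μ : Measure ℝ) (Gr : Fin n → ℝ → ℝ) : ℝ :=
  ∫ x, (∑ r, (1 - Gr r x) ^ 2) / n ∂μ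

/-- `ᾱ = ∫ (1/m) ∑ᵢ F_{[i]}(x)² dG(x)`. -/
def alphaBarInt {m : ℕ} (ν : Measure ℝ) (Fi : Fin m → ℝ → ℝ) : ℝ :=
  ∫ x, (∑ i, Fi i x ^ 2) / m ∂ν

/-- `δ̄₀² = (1/(mn)) ∑ᵢ ∑ᵣ δ̄_{ir}²` where `δ̄_{ir} = P(X_{[i]1} < Y_{[r]1})`,
given the stratum distributions `μi i` of `X_{[i]1}` and `νr r` of `Y_{[r]1}`. -/
def deltaBar0sq {m n : ℕ} (μi : Fin m → Measure ℝ) (νr : Fin n → Measure ℝ) : ℝ :=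
  (∑ i, ∑ r, probLT (μi i) (νr r) ^ 2) / (m * n)

/-- `φ₁₀(x) = (1/(nl)) ∑_{r,s} E[φ(x, Y_{[r]s})]`. -/
def phi10B (P : Measure Ω) {n l : ℕ} (Y : Fin n → Fin l → Ω → ℝ) (x : ℝ) : ℝ :=
  (∑ r, ∑ s, ∫ ω, phi x (Y r s ω) ∂P) / (n * l)

/-- `φ₀₁(y) = (1/(mk)) ∑_{i,j} E[φ(X_{[i]j}, y)]`. -/
def phi01B (P : Measure Ω) {m k : ℕ} (X : Fin m → Fin k → Ω → ℝ) (y : ℝ) : ℝ :=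
  (∑ i, ∑ j, ∫ ω, phi (X i j ω) y ∂P) / (m * k)

/-- Deterministic (data-level) estimated placement value `Û_{rs}` for balanced data. -/
def UhatD {m n k l : ℕ} (X : Fin m → Fin k → ℝ) (Y : Fin n → Fin l → ℝ)
    (r : Fin n) (s : Fin l) : ℝ :=
  1 - (∑ i, ∑ j, phi (X i j) (Y r s)) / (m * k)

/-- Deterministic (data-level) Mann–Whitney statistic for balanced data. -/
def deltaHatD {m n k l : ℕ} (X : Fin m → Fin k → ℝ) (Y : Fin n → Fin l → ℝ) : ℝ :=
  (∑ i, ∑ j, ∑ r, ∑ s, phi (X i j) (Y r s)) / (m * k * n * l)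

/-- Deterministic (data-level) estimated placement value `Û_{rs}` for unbalanced data. -/
def UhatUD {m n : ℕ} {k : Fin m → ℕ} {l : Fin n → ℕ}
    (X : ∀ i, Fin (k i) → ℝ) (Y : ∀ r, Fin (l r) → ℝ) (r : Fin n) (s : Fin (l r)) : ℝ :=
  1 - ∑ i, ∑ j, phi (X i j) (Y r s) / (m * k i)

/-- Deterministic (data-level) Mann–Whitney statistic for unbalanced data. -/
def deltaHatUD {m n : ℕ} {k : Fin m → ℕ} {l : Fin n → ℕ}
    (X : ∀ i, Fin (k i) → ℝ) (Y : ∀ r, Fin (l r) → ℝ) : ℝ :=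
  ∑ i, ∑ j, ∑ r, ∑ s, phi (X i j) (Y r s) / (m * k i * n * l r)

/-- Estimated placement value `Ŵ_{ij} = (1/(nl)) ∑_{r,s} φ(Y_{[r]s}, X_{[i]j})` of `X`
(the diseased distribution `G` as reference). -/
def WhatB {m n k l : ℕ} (X : Fin m → Fin k → Ω → ℝ) (Y : Fin n → Fin l → Ω → ℝ)
    (i : Fin m) (j : Fin k) (ω : Ω) : ℝ :=
  (∑ r, ∑ s, phi (Y r s ω) (X i j ω)) / (n * l)

section AuxProof
open Set
open scoped ENNReal

/- basic phi facts -/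
lemma phi_nonneg (x y : ℝ) : 0 ≤ phi x y := by unfold phi; split_ifs <;> norm_num

lemma phi_le_one (x y : ℝ) : phi x y ≤ 1 := by unfold phi; split_ifs <;> norm_num

lemma abs_phi_le_one (x y : ℝ) : |phi x y| ≤ 1 := by
  rw [abs_le]; constructor
  · linarith [phi_nonneg x y]
  · exact phi_le_one x y

lemma phi_mul_self (x y : ℝ) : phi x y * phi x y = phi x y := by
  unfold phi; split_ifs <;> ring

lemma measurable_phi : Measurable (fun p : ℝ × ℝ => phi p.1 p.2) := by
  unfold phi
  exact Measurable.ite (measurableSet_lt measurable_fst measurable_snd)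
    measurable_const measurable_const

lemma integrable_of_bound {α : Type*} [MeasurableSpace α] (ρ : Measure α) [IsFiniteMeasure ρ]
    {f : α → ℝ} (hm : Measurable f) (C : ℝ) (h : ∀ a, |f a| ≤ C) : Integrable f ρ :=
  ⟨hm.aestronglyMeasurable, HasFiniteIntegral.of_bounded (C := C)
    (ae_of_all _ (by simpa [Real.norm_eq_abs] using h))⟩

lemma integral_phi_right (ν : Measure ℝ) (x : ℝ) :
    ∫ y, phi x y ∂ν = (ν (Set.Ioi x)).toReal := by
  have : (fun y => phi x y) = (Set.Ioi x).indicator (fun _ => (1:ℝ)) := by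
    funext y; simp [phi, Set.indicator, Set.mem_Ioi]
  rw [this]
  simpa [measureReal_def] using integral_indicator_one (measurableSet_Ioi (a := x)) (μ := ν)

lemma integral_phi_left (μ : Measure ℝ) (y : ℝ) :
    ∫ x, phi x y ∂μ = (μ (Set.Iio y)).toReal := by
  have : (fun x => phi x y) = (Set.Iio y).indicator (fun _ => (1:ℝ)) := by
    funext x; simp [phi, Set.indicator, Set.mem_Iio]
  rw [this]
  simpa [measureReal_def] using integral_indicator_one (measurableSet_Iio (a := y)) (μ := μ)

lemma integral_phi_pair (ρ : Measure (ℝ × ℝ)) :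
    ∫ p, phi p.1 p.2 ∂ρ = (ρ {p : ℝ × ℝ | p.1 < p.2}).toReal := by
  have : (fun p : ℝ × ℝ => phi p.1 p.2)
      = ({p : ℝ × ℝ | p.1 < p.2}).indicator (fun _ => (1:ℝ)) := by
    funext p; simp [phi, Set.indicator]
  rw [this]
  exact (integral_indicator_one (measurableSet_lt measurable_fst measurable_snd) (μ := ρ)).trans (measureReal_def _ _)

lemma measurable_Ioi_apply (ν : Measure ℝ) : Measurable (fun x => ν (Set.Ioi x)) := by
  apply Antitone.measurable
  intro a b hab
  exact measure_mono (Set.Ioi_subset_Ioi hab)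

lemma toReal_Ioi (ν : Measure ℝ) [IsProbabilityMeasure ν] (x : ℝ) :
    (ν (Set.Ioi x)).toReal = 1 - (ν (Set.Iic x)).toReal := by
  have h : ν (Set.Iic x) + ν (Set.Ioi x) = 1 := by
    rw [← measure_union (Set.Iic_disjoint_Ioi le_rfl) measurableSet_Ioi,
      Set.Iic_union_Ioi, measure_univ]
  have h2 : (ν (Set.Iic x) + ν (Set.Ioi x)).toReal = 1 := by rw [h]; simp
  rw [ENNReal.toReal_add (measure_ne_top ν _) (measure_ne_top ν _)] at h2
  linarith

lemma prod_lt_lintegral (μ ν : Measure ℝ) [SFinite ν] :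
    (μ.prod ν) {p : ℝ × ℝ | p.1 < p.2} = ∫⁻ x, ν (Set.Ioi x) ∂μ := by
  rw [Measure.prod_apply (measurableSet_lt measurable_fst measurable_snd)]
  apply lintegral_congr
  intro x
  congr 1

lemma probLT_eq_integral (μ ν : Measure ℝ) [IsProbabilityMeasure μ] [IsProbabilityMeasure ν] :
    probLT μ ν = ∫ x, (ν (Set.Ioi x)).toReal ∂μ := by
  rw [probLT, prod_lt_lintegral, ← integral_toReal ((measurable_Ioi_apply ν).aemeasurable)]
  exact ae_of_all _ (fun x => lt_of_le_of_lt prob_le_one ENNReal.one_lt_top)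


lemma measurable_phi_comp {α : Type*} [MeasurableSpace α] {f g : α → ℝ}
    (hf : Measurable f) (hg : Measurable g) : Measurable (fun a => phi (f a) (g a)) := by
  have := measurable_phi.comp (hf.prodMk hg)
  exact this

lemma moment_B (μ ν ν' : Measure ℝ) [IsProbabilityMeasure μ] [IsProbabilityMeasure ν]
    [IsProbabilityMeasure ν'] :
    ∫ z : ℝ × (ℝ × ℝ), phi z.1 z.2.1 * phi z.1 z.2.2 ∂(μ.prod (ν.prod ν'))
      = ∫ x, (ν (Set.Ioi x)).toReal * (ν' (Set.Ioi x)).toReal ∂μ := by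
  have hm : Measurable (fun z : ℝ × (ℝ × ℝ) => phi z.1 z.2.1 * phi z.1 z.2.2) :=
    (measurable_phi_comp measurable_fst (measurable_fst.comp measurable_snd)).mul
      (measurable_phi_comp measurable_fst (measurable_snd.comp measurable_snd))
  have hint : Integrable (fun z : ℝ × (ℝ × ℝ) => phi z.1 z.2.1 * phi z.1 z.2.2)
      (μ.prod (ν.prod ν')) := by
    apply integrable_of_bound _ hm 1
    intro z
    rw [abs_mul]
    calc |phi z.1 z.2.1| * |phi z.1 z.2.2| ≤ 1 * 1 :=
      mul_le_mul (abs_phi_le_one _ _) (abs_phi_le_one _ _) (abs_nonneg _) zero_le_one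
    _ = 1 := by ring
  rw [MeasureTheory.integral_prod _ hint]
  apply integral_congr_ae
  filter_upwards with x
  rw [MeasureTheory.integral_prod_mul (f := fun y => phi x y) (g := fun y => phi x y),
    integral_phi_right, integral_phi_right]

lemma moment_A (μ μ' ν : Measure ℝ) [IsProbabilityMeasure μ] [IsProbabilityMeasure μ']
    [IsProbabilityMeasure ν] :
    ∫ z : (ℝ × ℝ) × ℝ, phi z.1.1 z.2 * phi z.1.2 z.2 ∂((μ.prod μ').prod ν)
      = ∫ y, (μ (Set.Iio y)).toReal * (μ' (Set.Iio y)).toReal ∂ν := by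
  have hm : Measurable (fun z : (ℝ × ℝ) × ℝ => phi z.1.1 z.2 * phi z.1.2 z.2) :=
    (measurable_phi_comp (measurable_fst.comp measurable_fst) measurable_snd).mul
      (measurable_phi_comp (measurable_snd.comp measurable_fst) measurable_snd)
  have hint : Integrable (fun z : (ℝ × ℝ) × ℝ => phi z.1.1 z.2 * phi z.1.2 z.2)
      ((μ.prod μ').prod ν) := by
    apply integrable_of_bound _ hm 1
    intro z
    rw [abs_mul]
    calc |phi z.1.1 z.2| * |phi z.1.2 z.2| ≤ 1 * 1 :=
      mul_le_mul (abs_phi_le_one _ _) (abs_phi_le_one _ _) (abs_nonneg _) zero_le_one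
    _ = 1 := by ring
  rw [MeasureTheory.integral_prod_symm _ hint]
  apply integral_congr_ae
  filter_upwards with y
  rw [MeasureTheory.integral_prod_mul (f := fun x => phi x y) (g := fun x => phi x y),
    integral_phi_left, integral_phi_left]

lemma map_eq_of_cdf (P : Measure Ω) [IsProbabilityMeasure P] {Z : Ω → ℝ} (hZ : Measurable Z)
    (μ : Measure ℝ) [IsProbabilityMeasure μ] (h : ∀ t, cdfOf P Z t = cdfM μ t) :
    P.map Z = μ := by
  haveI : IsProbabilityMeasure (P.map Z) := Measure.isProbabilityMeasure_map hZ.aemeasurable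
  refine MeasureTheory.Measure.ext_of_Iic (P.map Z) μ (fun a => ?_)
  have h1 : (P.map Z) (Set.Iic a) = P {ω | Z ω ≤ a} := by
    rw [Measure.map_apply hZ measurableSet_Iic]; rfl
  have h2 := h a
  rw [cdfOf, cdfM] at h2
  rw [h1]
  exact (ENNReal.toReal_eq_toReal_iff' (measure_ne_top _ _) (measure_ne_top _ _)).mp h2


lemma atom_free {m : ℕ} (μi : Fin m → Measure ℝ) [∀ i, IsProbabilityMeasure (μi i)]
    (F : ℝ → ℝ) (contF : Continuous F)
    (hF : ∀ t, F t = (∑ i, (μi i (Set.Iic t)).toReal) / m) (i : Fin m) (y : ℝ) :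
    μi i {y} = 0 := by
  by_contra h
  have hmpos : 0 < (m : ℝ) := by
    have := i.pos
    exact_mod_cast this
  have hc : 0 < (μi i {y}).toReal := ENNReal.toReal_pos h (measure_ne_top _ _)
  set c := (μi i {y}).toReal with hcdef
  have key : ∀ t, t < y → F y - F t ≥ c / m := by
    intro t ht
    have hstep : ∀ j : Fin m, (μi j (Set.Iic t)).toReal ≤ (μi j (Set.Iic y)).toReal := by
      intro j
      exact ENNReal.toReal_le_toReal (measure_ne_top _ _) (measure_ne_top _ _) |>.mpr
        (measure_mono (Set.Iic_subset_Iic.mpr ht.le))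
    have hi : (μi i (Set.Iic t)).toReal + c ≤ (μi i (Set.Iic y)).toReal := by
      have hsub : Set.Iic t ∪ {y} ⊆ Set.Iic y := by
        intro z hz
        rcases hz with hz | hz
        · exact le_trans hz ht.le
        · simp at hz; simp [hz]
      have hdisj : Disjoint (Set.Iic t) ({y} : Set ℝ) := by
        simp only [Set.disjoint_singleton_right, Set.mem_Iic, not_le]
        exact ht
      have := measure_mono (μ := μi i) hsub
      rw [measure_union hdisj (measurableSet_singleton y)] at this
      have htr := ENNReal.toReal_le_toReal
        (by exact ENNReal.add_ne_top.mpr ⟨measure_ne_top _ _, measure_ne_top _ _⟩)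
        (measure_ne_top (μi i) (Set.Iic y)) |>.mpr this
      rw [ENNReal.toReal_add (measure_ne_top _ _) (measure_ne_top _ _)] at htr
      exact htr
    have hsum : (∑ j, (μi j (Set.Iic t)).toReal) + c ≤ ∑ j, (μi j (Set.Iic y)).toReal := by
      have h1 : ∀ j : Fin m, (if j = i then (μi j (Set.Iic t)).toReal + c
          else (μi j (Set.Iic t)).toReal) = (μi j (Set.Iic t)).toReal + (if j = i then c else 0) := by
        intro j; by_cases hj : j = i <;> simp [hj]
      have h2 : (∑ j, (if j = i then (μi j (Set.Iic t)).toReal + c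
          else (μi j (Set.Iic t)).toReal)) ≤ ∑ j, (μi j (Set.Iic y)).toReal := by
        apply Finset.sum_le_sum
        intro j _
        by_cases hj : j = i
        · subst hj; simpa using hi
        · simp only [hj, if_false]; exact hstep j
      calc (∑ j, (μi j (Set.Iic t)).toReal) + c
          = ∑ j, (if j = i then (μi j (Set.Iic t)).toReal + c
            else (μi j (Set.Iic t)).toReal) := by
            simp only [h1, Finset.sum_add_distrib, Finset.sum_ite_eq', Finset.mem_univ, if_true]
        _ ≤ _ := h2
    rw [hF y, hF t, ← sub_div, ge_iff_le, div_le_div_iff_of_pos_right hmpos]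
    linarith
  have hseq : Tendsto (fun j : ℕ => y - 1/(j+1 : ℝ)) atTop (𝓝 y) := by
    have h0 := tendsto_one_div_add_atTop_nhds_zero_nat (𝕜 := ℝ)
    have h1 : Tendsto (fun _ : ℕ => y) atTop (𝓝 y) := tendsto_const_nhds
    simpa using h1.sub h0
  have hFy : Tendsto (fun j : ℕ => F (y - 1/(j+1:ℝ))) atTop (𝓝 (F y)) :=
    (contF.tendsto y).comp hseq
  have hle : F y ≤ F y - c / m := by
    apply le_of_tendsto hFy
    filter_upwards with j
    have hlt : y - 1/(j+1:ℝ) < y := by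
      have : 0 < 1/(j+1:ℝ) := by positivity
      linarith
    have := key _ hlt
    linarith
  have : 0 < c / m := div_pos hc hmpos
  linarith


lemma isProb_avg {m : ℕ} (hm : 1 ≤ m) (μi : Fin m → Measure ℝ)
    [∀ i, IsProbabilityMeasure (μi i)] :
    IsProbabilityMeasure ((m : ℝ≥0∞)⁻¹ • ∑ i, μi i) := by
  constructor
  have h1 : (∑ i, μi i) (Set.univ) = m := by
    rw [Measure.coe_finset_sum]
    simp [measure_univ]
  rw [Measure.smul_apply, h1, smul_eq_mul]
  exact ENNReal.inv_mul_cancel (by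
    exact_mod_cast (Nat.cast_ne_zero (R := ℝ≥0∞)).mpr (by omega)) (by simp)

lemma avg_measure {m : ℕ} (hm : 1 ≤ m) (μ : Measure ℝ) [IsProbabilityMeasure μ]
    (μi : Fin m → Measure ℝ) [∀ i, IsProbabilityMeasure (μi i)]
    (h : ∀ t, (μ (Set.Iic t)).toReal = (∑ i, (μi i (Set.Iic t)).toReal) / m) :
    μ = (m : ℝ≥0∞)⁻¹ • ∑ i, μi i := by
  have hm0 : (0:ℝ) < m := by exact_mod_cast hm
  refine MeasureTheory.Measure.ext_of_Iic μ _ (fun a => ?_)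
  have h1 : μ (Set.Iic a) = ENNReal.ofReal ((∑ i, (μi i (Set.Iic a)).toReal) / m) := by
    rw [← h a, ENNReal.ofReal_toReal (measure_ne_top _ _)]
  rw [h1, Measure.smul_apply, Measure.coe_finset_sum, smul_eq_mul]
  have h2 : (Finset.univ.sum (fun i => ⇑(μi i))) (Set.Iic a) = ∑ i, μi i (Set.Iic a) := by
    simp
  rw [h2]
  have h3 : ∑ i, μi i (Set.Iic a) = ENNReal.ofReal (∑ i, (μi i (Set.Iic a)).toReal) := by
    rw [ENNReal.ofReal_sum_of_nonneg (fun i _ => ENNReal.toReal_nonneg)]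
    exact Finset.sum_congr rfl (fun i _ => (ENNReal.ofReal_toReal (measure_ne_top _ _)).symm)
  rw [h3, ENNReal.ofReal_div_of_pos hm0, ENNReal.ofReal_natCast, div_eq_mul_inv, mul_comm]

lemma integral_avg {m : ℕ} (μi : Fin m → Measure ℝ) [∀ i, IsProbabilityMeasure (μi i)]
    {f : ℝ → ℝ} (hfm : Measurable f) (C : ℝ) (hfb : ∀ x, |f x| ≤ C) :
    ∫ x, f x ∂((m : ℝ≥0∞)⁻¹ • ∑ i, μi i) = (∑ i, ∫ x, f x ∂(μi i)) / m := by
  rw [integral_smul_measure,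
    integral_finset_sum_measure (fun i _ => integrable_of_bound _ hfm C hfb)]
  simp [ENNReal.toReal_inv, div_eq_mul_inv, mul_comm]

lemma probLT_avg {m n : ℕ} (hm : 1 ≤ m) (hn : 1 ≤ n) (μi : Fin m → Measure ℝ)
    [∀ i, IsProbabilityMeasure (μi i)] (νr : Fin n → Measure ℝ)
    [∀ r, IsProbabilityMeasure (νr r)] :
    probLT ((m : ℝ≥0∞)⁻¹ • ∑ i, μi i) ((n : ℝ≥0∞)⁻¹ • ∑ r, νr r)
      = (∑ i, ∑ r, probLT (μi i) (νr r)) / (m * n) := by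
  haveI := isProb_avg hm μi
  haveI := isProb_avg hn νr
  have hIoi : ∀ x, ((n : ℝ≥0∞)⁻¹ • ∑ r, νr r) (Set.Ioi x)
      = (n : ℝ≥0∞)⁻¹ * ∑ r, νr r (Set.Ioi x) := by
    intro x
    rw [Measure.smul_apply, Measure.coe_finset_sum, smul_eq_mul]
    simp
  have step : (((m : ℝ≥0∞)⁻¹ • ∑ i, μi i).prod ((n : ℝ≥0∞)⁻¹ • ∑ r, νr r))
        {p : ℝ × ℝ | p.1 < p.2}
      = (m : ℝ≥0∞)⁻¹ * ∑ i, ((n : ℝ≥0∞)⁻¹ * ∑ r, ((μi i).prod (νr r)) {p : ℝ × ℝ | p.1 < p.2}) := by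
    rw [prod_lt_lintegral]
    have : ∫⁻ x, (((n : ℝ≥0∞)⁻¹ • ∑ r, νr r) (Set.Ioi x)) ∂((m : ℝ≥0∞)⁻¹ • ∑ i, μi i)
        = (m : ℝ≥0∞)⁻¹ * ∑ i, ∫⁻ x, ((n : ℝ≥0∞)⁻¹ * ∑ r, νr r (Set.Ioi x)) ∂(μi i) := by
      simp only [hIoi]
      rw [lintegral_smul_measure, lintegral_finset_sum_measure, smul_eq_mul]
    rw [this]
    congr 1
    apply Finset.sum_congr rfl
    intro i _
    rw [lintegral_const_mul _ (by
      exact Finset.measurable_sum _ (fun r _ => measurable_Ioi_apply (νr r)))]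
    congr 1
    rw [lintegral_finset_sum _ (fun r _ => measurable_Ioi_apply (νr r))]
    exact Finset.sum_congr rfl (fun r _ => (prod_lt_lintegral _ _).symm)
  rw [probLT, step]
  have hfin : ∀ (i : Fin m) (r : Fin n), ((μi i).prod (νr r)) {p : ℝ × ℝ | p.1 < p.2} ≠ ⊤ :=
    fun i r => measure_ne_top _ _
  rw [ENNReal.toReal_mul, ENNReal.toReal_sum (fun i _ => by
    exact ENNReal.mul_ne_top (by
      simp [(Nat.cast_ne_zero (R := ℝ≥0∞)).mpr (show n ≠ 0 by omega)]) (by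
      exact (ENNReal.sum_lt_top.mpr (fun r _ => (hfin i r).lt_top)).ne))]
  simp only [ENNReal.toReal_mul, ENNReal.toReal_inv, ENNReal.toReal_natCast]
  have : ∀ i : Fin m, (ENNReal.toReal (∑ r, ((μi i).prod (νr r)) {p : ℝ × ℝ | p.1 < p.2}))
      = ∑ r, probLT (μi i) (νr r) := by
    intro i
    rw [ENNReal.toReal_sum (fun r _ => hfin i r)]
    rfl
  have hm0 : (0:ℝ) < m := by exact_mod_cast hm
  have hn0 : (0:ℝ) < n := by exact_mod_cast hn
  simp only [this]
  rw [← Finset.mul_sum, div_eq_mul_inv, mul_inv]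
  ring


lemma sum_ite_diag {α : Type*} [Fintype α] [DecidableEq α] (u : α → ℝ) (v : α → α → ℝ) :
    ∑ a : α, ∑ b : α, (if a = b then u a else v a b)
      = ∑ a, u a + ((∑ a, ∑ b, v a b) - ∑ a, v a a) := by
  have h : ∀ a b : α, (if a = b then u a else v a b)
      = v a b + (if b = a then u a - v a a else 0) := by
    intro a b
    by_cases hab : a = b
    · subst hab; simp
    · simp [hab, Ne.symm hab]
  simp only [h, Finset.sum_add_distrib, Finset.sum_ite_eq', Finset.mem_univ, if_true,
    Finset.sum_sub_distrib]
  ring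

lemma sum_fst {α β : Type*} [Fintype α] [Fintype β] (f : α → ℝ) :
    ∑ p : α × β, f p.1 = (Fintype.card β : ℝ) * ∑ a, f a := by
  rw [Fintype.sum_prod_type]
  simp only [Finset.sum_const, Finset.card_univ, nsmul_eq_mul]
  rw [← Finset.mul_sum]

lemma sum_fst_fin {α : Type*} [Fintype α] {c : ℕ} (f : α → ℝ) :
    ∑ p : α × Fin c, f p.1 = (c:ℝ) * ∑ a, f a := by
  rw [sum_fst]; simp

lemma sum_rot {α β γ : Type*} [Fintype α] [Fintype β] [Fintype γ] (f : α → β → γ → ℝ) :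
    ∑ a, ∑ b, ∑ c, f a b c = ∑ c, ∑ a, ∑ b, f a b c := by
  calc ∑ a, ∑ b, ∑ c, f a b c = ∑ a, ∑ c, ∑ b, f a b c :=
        Finset.sum_congr rfl (fun a _ => Finset.sum_comm)
    _ = ∑ c, ∑ a, ∑ b, f a b c := Finset.sum_comm

lemma mul_sum2 {α β : Type*} [Fintype α] [Fintype β] (c : ℝ) (f : α → β → ℝ) :
    ∑ a, ∑ b, c * f a b = c * ∑ a, ∑ b, f a b := by
  simp [Finset.mul_sum]

lemma split2 {α β : Type*} [Fintype α] [Fintype β] (f g h : α → β → ℝ) :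
    ∑ a, ∑ b, (f a b + (g a b - h a b))
      = (∑ a, ∑ b, f a b) + ((∑ a, ∑ b, g a b) - ∑ a, ∑ b, h a b) := by
  simp [Finset.sum_add_distrib, Finset.sum_sub_distrib]

lemma split1 {α : Type*} [Fintype α] (f g h : α → ℝ) :
    ∑ a, (f a + (g a - h a)) = (∑ a, f a) + ((∑ a, g a) - ∑ a, h a) := by
  simp [Finset.sum_add_distrib, Finset.sum_sub_distrib]

lemma integral_sum_sq_dev {Ω : Type*} [MeasurableSpace Ω] (P : Measure Ω)
    [IsProbabilityMeasure P] {k : ℕ} (hk : 1 ≤ k) (g : Fin k → Ω → ℝ) (βv γv : ℝ)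
    (hint : ∀ j j', Integrable (fun ω => g j ω * g j' ω) P)
    (hval : ∀ j j', ∫ ω, g j ω * g j' ω ∂P = if j = j' then βv else γv) :
    ∫ ω, ∑ j, (g j ω - (∑ j', g j' ω) / k) ^ 2 ∂P = ((k:ℝ) - 1) * (βv - γv) := by
  have hkR : (k:ℝ) ≠ 0 := Nat.cast_ne_zero.mpr (by omega)
  have hpt : ∀ ω : Ω, ∑ j, (g j ω - (∑ j', g j' ω) / k) ^ 2
      = (∑ j, g j ω * g j ω) - (∑ j, ∑ j', g j ω * g j' ω) / k := by
    intro ω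
    have h1 : ∑ j, (g j ω - (∑ j', g j' ω) / k) ^ 2
        = ∑ j, (g j ω * g j ω - 2 * ((∑ j', g j' ω) / k) * g j ω
          + ((∑ j', g j' ω) / k) ^ 2) := by
      apply Finset.sum_congr rfl; intro j _; ring
    rw [h1, Finset.sum_add_distrib, Finset.sum_sub_distrib, Finset.sum_const,
      Finset.card_univ, Fintype.card_fin, ← Finset.mul_sum]
    have h2 : ∑ j, ∑ j', g j ω * g j' ω = (∑ j, g j ω) * (∑ j', g j' ω) := by
      rw [Finset.sum_mul_sum]
    rw [h2]
    field_simp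
    have hkk : (k:ℝ)^2 * (k:ℝ)⁻¹^2 = 1 := by field_simp
    linear_combination (∑ j', g j' ω)^2 * hkk
  calc ∫ ω, ∑ j, (g j ω - (∑ j', g j' ω) / k) ^ 2 ∂P
      = ∫ ω, ((∑ j, g j ω * g j ω) - (∑ j, ∑ j', g j ω * g j' ω) / k) ∂P := by
        apply integral_congr_ae; filter_upwards with ω; exact hpt ω
    _ = (∑ j, ∫ ω, g j ω * g j ω ∂P) - (∑ j, ∑ j', ∫ ω, g j ω * g j' ω ∂P) / k := by
        rw [integral_sub (integrable_finset_sum _ (fun j _ => hint j j))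
          (Integrable.div_const (integrable_finset_sum _ (fun j _ =>
            integrable_finset_sum _ (fun j' _ => hint j j'))) _)]
        rw [integral_finset_sum _ (fun j _ => hint j j)]
        rw [integral_div]
        rw [integral_finset_sum _ (fun j _ =>
          integrable_finset_sum _ (fun j' _ => hint j j'))]
        congr 1
        congr 1
        exact Finset.sum_congr rfl (fun j _ => integral_finset_sum _ (fun j' _ => hint j j'))
    _ = ((k:ℝ) - 1) * (βv - γv) := by
        simp only [hval]
        rw [sum_ite_diag (fun _ => βv) (fun _ _ => γv)]
        simp only [Finset.sum_const, Finset.card_univ, Fintype.card_fin, nsmul_eq_mul]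
        field_simp
        rw [if_pos trivial]
        ring

set_option maxHeartbeats 4000000 in
/-- Under BRSS with consistent rankings and true AUC `δ₀`,
`E[S²] = Var((mknl/(mk+nl))^{1/2}(δ̂_BRSS − δ₀))`
`+ (δ₀ − δ̄₀² − (β̄ − δ̄₀²) − (ᾱ − δ̄₀²))/(mk + nl)`. -/
theorem brss_S2_expectation {Ω : Type*} [MeasurableSpace Ω]
    (P : Measure Ω) [IsProbabilityMeasure P]
    (F G : ℝ → ℝ) {m n k l : ℕ} (Fi : Fin m → ℝ → ℝ) (Gr : Fin n → ℝ → ℝ)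
    (μ ν : Measure ℝ) [IsProbabilityMeasure μ] [IsProbabilityMeasure ν]
    (hμ : ∀ t, cdfM μ t = F t) (hν : ∀ t, cdfM ν t = G t)
    (μi : Fin m → Measure ℝ) [∀ i, IsProbabilityMeasure (μi i)]
    (hμi : ∀ i t, cdfM (μi i) t = Fi i t)
    (νr : Fin n → Measure ℝ) [∀ r, IsProbabilityMeasure (νr r)]
    (hνr : ∀ r t, cdfM (νr r) t = Gr r t)
    (δ₀ : ℝ) (hδ₀ : δ₀ = probLT μ ν)
    (X : Fin m → Fin k → Ω → ℝ) (Y : Fin n → Fin l → Ω → ℝ)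
    (hRSS : IsBRSS P F G Fi Gr X Y) :
    ∫ ω, S2B X Y ω ∂P =
      variance (fun ω =>
          Real.sqrt (((m : ℝ) * (k : ℝ) * (n : ℝ) * (l : ℝ)) /
              ((m : ℝ) * (k : ℝ) + (n : ℝ) * (l : ℝ))) *
            (deltaHatB X Y ω - δ₀)) P +
        (δ₀ - deltaBar0sq μi νr - (betaBarInt μ Gr - deltaBar0sq μi νr) -
            (alphaBarInt ν Fi - deltaBar0sq μi νr)) /
          ((m : ℝ) * (k : ℝ) + (n : ℝ) * (l : ℝ)) := by
  classical
  obtain ⟨hm, hn, hk, hl, contF, contG, measX, measY, indep, cdfX, cdfY, Favg, Gavg⟩ := hRSS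
  have hm0 : (0:ℝ) < m := by exact_mod_cast hm
  have hn0 : (0:ℝ) < n := by exact_mod_cast hn
  have hk1 : (1:ℝ) < k := by exact_mod_cast hk
  have hl1 : (1:ℝ) < l := by exact_mod_cast hl
  have hk0 : (0:ℝ) < k := by linarith
  have hl0 : (0:ℝ) < l := by linarith
  -- laws of individual variables
  have lawX : ∀ i j, P.map (X i j) = μi i := by
    intro i j
    exact map_eq_of_cdf P (measX i j) (μi i) (fun t => by rw [cdfX i j t, hμi i t])
  have lawY : ∀ r s, P.map (Y r s) = νr r := by
    intro r s
    exact map_eq_of_cdf P (measY r s) (νr r) (fun t => by rw [cdfY r s t, hνr r t])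
  -- population measures are averages
  have hμavg : μ = (m : ℝ≥0∞)⁻¹ • ∑ i, μi i := by
    apply avg_measure hm μ μi
    intro t
    have h1 : (μ (Set.Iic t)).toReal = F t := hμ t
    rw [h1, Favg t]
    congr 1
    exact Finset.sum_congr rfl (fun i _ => by rw [← hμi i t]; rfl)
  have hνavg : ν = (n : ℝ≥0∞)⁻¹ • ∑ r, νr r := by
    apply avg_measure hn ν νr
    intro t
    have h1 : (ν (Set.Iic t)).toReal = G t := hν t
    rw [h1, Gavg t]
    congr 1
    exact Finset.sum_congr rfl (fun r _ => by rw [← hνr r t]; rfl)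
  -- atomlessness of the X strata
  have hatom : ∀ i y, μi i {y} = 0 := by
    intro i y
    apply atom_free μi F contF _ i y
    intro t
    rw [Favg t]
    congr 1
    exact Finset.sum_congr rfl (fun i' _ => by rw [← hμi i' t]; rfl)
  have hIic_eq_Iio : ∀ i y, μi i (Set.Iic y) = μi i (Set.Iio y) := by
    intro i y
    apply le_antisymm
    · calc μi i (Set.Iic y) = μi i (Set.Iio y ∪ {y}) := by rw [Set.union_singleton, Set.Iio_insert]
        _ ≤ μi i (Set.Iio y) + μi i {y} := measure_union_le _ _
        _ = μi i (Set.Iio y) := by rw [hatom i y, add_zero]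
    · exact measure_mono Set.Iio_subset_Iic_self
  have hIio_eq : ∀ i y, (μi i (Set.Iio y)).toReal = Fi i y := by
    intro i y
    rw [← hIic_eq_Iio, ← hμi i y]; rfl
  have hIoi_eq : ∀ r x, (νr r (Set.Ioi x)).toReal = 1 - Gr r x := by
    intro r x
    rw [toReal_Ioi, ← hνr r x]; rfl
  -- monotone cdfs are measurable
  have hGrm : ∀ r, Measurable (Gr r) := by
    intro r
    have : Monotone (Gr r) := by
      intro a b hab
      rw [← hνr r a, ← hνr r b]
      exact ENNReal.toReal_le_toReal (measure_ne_top _ _) (measure_ne_top _ _) |>.mpr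
        (measure_mono (Set.Iic_subset_Iic.mpr hab))
    exact this.measurable
  have hFim : ∀ i, Measurable (Fi i) := by
    intro i
    have : Monotone (Fi i) := by
      intro a b hab
      rw [← hμi i a, ← hμi i b]
      exact ENNReal.toReal_le_toReal (measure_ne_top _ _) (measure_ne_top _ _) |>.mpr
        (measure_mono (Set.Iic_subset_Iic.mpr hab))
    exact this.measurable
  have hGrb : ∀ r x, 0 ≤ Gr r x ∧ Gr r x ≤ 1 := by
    intro r x
    rw [← hνr r x]
    exact ⟨ENNReal.toReal_nonneg, by
      rw [cdfM]
      exact ENNReal.toReal_le_of_le_ofReal zero_le_one (by simpa using prob_le_one)⟩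
  have hFib : ∀ i x, 0 ≤ Fi i x ∧ Fi i x ≤ 1 := by
    intro i x
    rw [← hμi i x]
    exact ⟨ENNReal.toReal_nonneg, by
      rw [cdfM]
      exact ENNReal.toReal_le_of_le_ofReal zero_le_one (by simpa using prob_le_one)⟩
  -- the main moment quantities
  set dv : Fin m → Fin n → ℝ := fun i r => probLT (μi i) (νr r) with hdvdef
  set Bv : Fin m → Fin n → Fin n → ℝ := fun i r r' =>
    ∫ x, (νr r (Set.Ioi x)).toReal * (νr r' (Set.Ioi x)).toReal ∂(μi i) with hBvdef
  set Av : Fin m → Fin m → Fin n → ℝ := fun i i' r =>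
    ∫ y, (μi i (Set.Iio y)).toReal * (μi i' (Set.Iio y)).toReal ∂(νr r) with hAvdef
  -- the value of δ₀
  have hs1 : δ₀ = (∑ i, ∑ r, dv i r) / (m * n) := by
    rw [hδ₀, hμavg, hνavg, probLT_avg hm hn]
  -- β̄ in terms of Bv
  have hbeta : betaBarInt μ Gr = (∑ i, ∑ r, Bv i r r) / (m * n) := by
    have hfm : Measurable (fun x => (∑ r, ((1:ℝ) - Gr r x)^2) / (n:ℝ)) :=
      (Finset.measurable_sum _ (fun r _ =>
        (measurable_const.sub (hGrm r)).pow_const 2)).div_const _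
    have hfb : ∀ x, |(∑ r, ((1:ℝ) - Gr r x)^2) / (n:ℝ)| ≤ 1 := by
      intro x
      rw [abs_div, abs_of_nonneg (by positivity : (0:ℝ) ≤ (n:ℝ)), div_le_one hn0,
        abs_of_nonneg (by positivity)]
      calc ∑ r, ((1:ℝ) - Gr r x)^2 ≤ ∑ _r : Fin n, (1:ℝ) := by
            apply Finset.sum_le_sum
            intro r _
            have h1 := (hGrb r x).1
            have h2 := (hGrb r x).2
            nlinarith
        _ = n := by simp
    have hGint : ∀ (i : Fin m) (r : Fin n),
        Integrable (fun x => ((1:ℝ) - Gr r x)^2) (μi i) :=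
      fun i r => integrable_of_bound _ ((measurable_const.sub (hGrm r)).pow_const 2) 1
        (fun x => by
          have h1 := (hGrb r x).1
          have h2 := (hGrb r x).2
          rw [abs_of_nonneg (by positivity)]
          nlinarith)
    rw [betaBarInt, hμavg, integral_avg μi hfm 1 hfb]
    have hi : ∀ i : Fin m, ∫ x, (∑ r, ((1:ℝ) - Gr r x)^2) / (n:ℝ) ∂(μi i)
        = (∑ r, Bv i r r) / n := by
      intro i
      rw [integral_div, integral_finset_sum _ (fun r _ => hGint i r)]
      congr 1
      apply Finset.sum_congr rfl
      intro r _
      rw [hBvdef]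
      apply integral_congr_ae
      filter_upwards with x
      rw [hIoi_eq r x]
      ring
    simp only [hi]
    rw [← Finset.sum_div, div_div, mul_comm (n:ℝ) (m:ℝ)]
  -- ᾱ in terms of Av
  have halpha : alphaBarInt ν Fi = (∑ i, ∑ r, Av i i r) / (m * n) := by
    have hfm : Measurable (fun y => (∑ i, Fi i y ^ 2) / (m:ℝ)) :=
      (Finset.measurable_sum _ (fun i _ => (hFim i).pow_const 2)).div_const _
    have hfb : ∀ y, |(∑ i, Fi i y ^ 2) / (m:ℝ)| ≤ 1 := by
      intro y
      rw [abs_div, abs_of_nonneg (by positivity : (0:ℝ) ≤ (m:ℝ)), div_le_one hm0,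
        abs_of_nonneg (by positivity)]
      calc ∑ i, Fi i y ^ 2 ≤ ∑ _i : Fin m, (1:ℝ) := by
            apply Finset.sum_le_sum
            intro i _
            have h1 := (hFib i y).1
            have h2 := (hFib i y).2
            nlinarith
        _ = m := by simp
    have hFint : ∀ (r : Fin n) (i : Fin m), Integrable (fun y => Fi i y ^ 2) (νr r) :=
      fun r i => integrable_of_bound _ ((hFim i).pow_const 2) 1
        (fun y => by
          have h1 := (hFib i y).1
          have h2 := (hFib i y).2
          rw [abs_of_nonneg (by positivity)]
          nlinarith)
    rw [alphaBarInt, hνavg, integral_avg νr hfm 1 hfb]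
    have hr : ∀ r : Fin n, ∫ y, (∑ i, Fi i y ^ 2) / (m:ℝ) ∂(νr r)
        = (∑ i, Av i i r) / m := by
      intro r
      rw [integral_div, integral_finset_sum _ (fun i _ => hFint r i)]
      congr 1
      apply Finset.sum_congr rfl
      intro i _
      rw [hAvdef]
      apply integral_congr_ae
      filter_upwards with y
      rw [hIio_eq i y]
      ring
    simp only [hr]
    rw [← Finset.sum_div, div_div, Finset.sum_comm]
  -- δ̄₀² in terms of dv
  have hdb : deltaBar0sq μi νr = (∑ i, ∑ r, (dv i r)^2) / (m * n) := rfl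
  -- random variables q
  set q : (Fin m × Fin k) → (Fin n × Fin l) → Ω → ℝ :=
    fun a b ω => phi (X a.1 a.2 ω) (Y b.1 b.2 ω) with hqdef
  have hqm : ∀ a b, Measurable (q a b) := fun a b =>
    measurable_phi_comp (measX a.1 a.2) (measY b.1 b.2)
  have hqb : ∀ a b ω, |q a b ω| ≤ 1 := fun a b ω => abs_phi_le_one _ _
  have hqint : ∀ a b, Integrable (q a b) P := fun a b =>
    integrable_of_bound P (hqm a b) 1 (hqb a b)
  have hqint2 : ∀ a b a' b', Integrable (fun ω => q a b ω * q a' b' ω) P := by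
    intro a b a' b'
    apply integrable_of_bound P ((hqm a b).mul (hqm a' b')) 1
    intro ω
    rw [Pi.mul_apply, abs_mul]
    calc |q a b ω| * |q a' b' ω| ≤ 1 * 1 :=
      mul_le_mul (hqb _ _ _) (hqb _ _ _) (abs_nonneg _) zero_le_one
    _ = 1 := by ring
  -- first moments
  have E1 : ∀ a b, ∫ ω, q a b ω ∂P = dv a.1 b.1 := by
    intro a b
    have hind : IndepFun (X a.1 a.2) (Y b.1 b.2) P :=
      indep.indepFun (show (Sum.inl a : (Fin m × Fin k) ⊕ (Fin n × Fin l)) ≠ Sum.inr b by simp)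
    have hmap : P.map (fun ω => (X a.1 a.2 ω, Y b.1 b.2 ω)) = (μi a.1).prod (νr b.1) := by
      rw [(indepFun_iff_map_prod_eq_prod_map_map (measX a.1 a.2).aemeasurable
        (measY b.1 b.2).aemeasurable).mp hind, lawX, lawY]
    have h2 : ∫ ω, q a b ω ∂P
        = ∫ p : ℝ × ℝ, phi p.1 p.2 ∂(P.map (fun ω => (X a.1 a.2 ω, Y b.1 b.2 ω))) := by
      rw [integral_map ((measX a.1 a.2).prodMk (measY b.1 b.2)).aemeasurable
        measurable_phi.aestronglyMeasurable]
    rw [h2, hmap, integral_phi_pair]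
    rfl
  -- second moments
  have key : ∀ a a' b b', ∫ ω, q a b ω * q a' b' ω ∂P
      = if a = a' then (if b = b' then dv a.1 b.1 else Bv a.1 b.1 b'.1)
        else (if b = b' then Av a.1 a'.1 b.1 else dv a.1 b.1 * dv a'.1 b'.1) := by
    have E2 : ∀ a b b', b ≠ b' → ∫ ω, q a b ω * q a b' ω ∂P = Bv a.1 b.1 b'.1 := by
      intro a b b' hbb
      have hYY : IndepFun (Y b.1 b.2) (Y b'.1 b'.2) P :=
        indep.indepFun (show (Sum.inr b : (Fin m × Fin k) ⊕ (Fin n × Fin l)) ≠ Sum.inr b'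
          by simpa using hbb)
      have hZm : ∀ c : (Fin m × Fin k) ⊕ (Fin n × Fin l),
          Measurable ((Sum.elim (fun p : Fin m × Fin k => X p.1 p.2)
            (fun p : Fin n × Fin l => Y p.1 p.2)) c) := by
        rintro (c | c)
        · exact measX c.1 c.2
        · exact measY c.1 c.2
      have hpair : IndepFun (fun ω => (Y b.1 b.2 ω, Y b'.1 b'.2 ω)) (X a.1 a.2) P :=
        indep.indepFun_prodMk hZm (Sum.inr b) (Sum.inr b') (Sum.inl a) (by simp) (by simp)
      have hmapYY : P.map (fun ω => (Y b.1 b.2 ω, Y b'.1 b'.2 ω))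
          = (νr b.1).prod (νr b'.1) := by
        rw [(indepFun_iff_map_prod_eq_prod_map_map (measY b.1 b.2).aemeasurable
          (measY b'.1 b'.2).aemeasurable).mp hYY, lawY, lawY]
      have hmapT : P.map (fun ω => (X a.1 a.2 ω, (Y b.1 b.2 ω, Y b'.1 b'.2 ω)))
          = (μi a.1).prod ((νr b.1).prod (νr b'.1)) := by
        rw [(indepFun_iff_map_prod_eq_prod_map_map (measX a.1 a.2).aemeasurable
          ((measY b.1 b.2).prodMk (measY b'.1 b'.2)).aemeasurable).mp hpair.symm,
          lawX, hmapYY]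
      have hfm : Measurable (fun z : ℝ × (ℝ × ℝ) => phi z.1 z.2.1 * phi z.1 z.2.2) :=
        (measurable_phi_comp measurable_fst (measurable_fst.comp measurable_snd)).mul
          (measurable_phi_comp measurable_fst (measurable_snd.comp measurable_snd))
      have h2 : ∫ ω, q a b ω * q a b' ω ∂P
          = ∫ z : ℝ × (ℝ × ℝ), phi z.1 z.2.1 * phi z.1 z.2.2
            ∂(P.map (fun ω => (X a.1 a.2 ω, (Y b.1 b.2 ω, Y b'.1 b'.2 ω)))) := by
        rw [integral_map ((measX a.1 a.2).prodMk
          ((measY b.1 b.2).prodMk (measY b'.1 b'.2))).aemeasurable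
          hfm.aestronglyMeasurable]
      rw [h2, hmapT, moment_B]
    have E3 : ∀ a a' b, a ≠ a' → ∫ ω, q a b ω * q a' b ω ∂P = Av a.1 a'.1 b.1 := by
      intro a a' b haa
      have hXX : IndepFun (X a.1 a.2) (X a'.1 a'.2) P :=
        indep.indepFun (show (Sum.inl a : (Fin m × Fin k) ⊕ (Fin n × Fin l)) ≠ Sum.inl a'
          by simpa using haa)
      have hZm : ∀ c : (Fin m × Fin k) ⊕ (Fin n × Fin l),
          Measurable ((Sum.elim (fun p : Fin m × Fin k => X p.1 p.2)
            (fun p : Fin n × Fin l => Y p.1 p.2)) c) := by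
        rintro (c | c)
        · exact measX c.1 c.2
        · exact measY c.1 c.2
      have hpair : IndepFun (fun ω => (X a.1 a.2 ω, X a'.1 a'.2 ω)) (Y b.1 b.2) P :=
        indep.indepFun_prodMk hZm (Sum.inl a) (Sum.inl a') (Sum.inr b) (by simp) (by simp)
      have hmapXX : P.map (fun ω => (X a.1 a.2 ω, X a'.1 a'.2 ω))
          = (μi a.1).prod (μi a'.1) := by
        rw [(indepFun_iff_map_prod_eq_prod_map_map (measX a.1 a.2).aemeasurable
          (measX a'.1 a'.2).aemeasurable).mp hXX, lawX, lawX]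
      have hmapT : P.map (fun ω => ((X a.1 a.2 ω, X a'.1 a'.2 ω), Y b.1 b.2 ω))
          = ((μi a.1).prod (μi a'.1)).prod (νr b.1) := by
        rw [(indepFun_iff_map_prod_eq_prod_map_map
          ((measX a.1 a.2).prodMk (measX a'.1 a'.2)).aemeasurable
          (measY b.1 b.2).aemeasurable).mp hpair, hmapXX, lawY]
      have hfm : Measurable (fun z : (ℝ × ℝ) × ℝ => phi z.1.1 z.2 * phi z.1.2 z.2) :=
        (measurable_phi_comp (measurable_fst.comp measurable_fst) measurable_snd).mul
          (measurable_phi_comp (measurable_snd.comp measurable_fst) measurable_snd)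
      have h2 : ∫ ω, q a b ω * q a' b ω ∂P
          = ∫ z : (ℝ × ℝ) × ℝ, phi z.1.1 z.2 * phi z.1.2 z.2
            ∂(P.map (fun ω => ((X a.1 a.2 ω, X a'.1 a'.2 ω), Y b.1 b.2 ω))) := by
        rw [integral_map (((measX a.1 a.2).prodMk (measX a'.1 a'.2)).prodMk
          (measY b.1 b.2)).aemeasurable hfm.aestronglyMeasurable]
      rw [h2, hmapT, moment_A]
    have E4 : ∀ a b a' b', a ≠ a' → b ≠ b' →
        ∫ ω, q a b ω * q a' b' ω ∂P = dv a.1 b.1 * dv a'.1 b'.1 := by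
      intro a b a' b' haa hbb
      have hZm : ∀ c : (Fin m × Fin k) ⊕ (Fin n × Fin l),
          Measurable ((Sum.elim (fun p : Fin m × Fin k => X p.1 p.2)
            (fun p : Fin n × Fin l => Y p.1 p.2)) c) := by
        rintro (c | c)
        · exact measX c.1 c.2
        · exact measY c.1 c.2
      have hpp : IndepFun (fun ω => (X a.1 a.2 ω, Y b.1 b.2 ω))
          (fun ω => (X a'.1 a'.2 ω, Y b'.1 b'.2 ω)) P :=
        indep.indepFun_prodMk_prodMk hZm (Sum.inl a) (Sum.inr b) (Sum.inl a') (Sum.inr b')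
          (by simpa using haa) (by simp) (by simp) (by simpa using hbb)
      have hind : IndepFun (q a b) (q a' b') P := hpp.comp measurable_phi measurable_phi
      have h2 := hind.integral_mul_eq_mul_integral (hqm a b).aestronglyMeasurable
        (hqm a' b').aestronglyMeasurable
      have h3 : ∫ ω, q a b ω * q a' b' ω ∂P = (∫ ω, q a b ω ∂P) * ∫ ω, q a' b' ω ∂P := h2
      rw [h3, E1, E1]
    intro a a' b b'
    by_cases haa : a = a'
    · subst haa
      rw [if_pos rfl]
      by_cases hbb : b = b'
      · subst hbb
        rw [if_pos rfl]
        have hpt : ∀ ω, q a b ω * q a b ω = q a b ω := fun ω => phi_mul_self _ _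
        calc ∫ ω, q a b ω * q a b ω ∂P = ∫ ω, q a b ω ∂P := by
              apply integral_congr_ae; filter_upwards with ω; exact hpt ω
          _ = dv a.1 b.1 := E1 a b
      · rw [if_neg hbb]
        exact E2 a b b' hbb
    · rw [if_neg haa]
      by_cases hbb : b = b'
      · subst hbb
        rw [if_pos rfl]
        exact E3 a a' b haa
      · rw [if_neg hbb]
        exact E4 a b a' b' haa hbb
  -- second moments of row/column sums
  set β2 : Fin m → ℝ := fun i => ∑ b : Fin n × Fin l, ∑ b' : Fin n × Fin l,
    (if b = b' then dv i b.1 else Bv i b.1 b'.1) with hβ2def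
  set γ2 : Fin m → Fin m → ℝ := fun i i' => ∑ b : Fin n × Fin l, ∑ b' : Fin n × Fin l,
    (if b = b' then Av i i' b.1 else dv i b.1 * dv i' b'.1) with hγ2def
  set β2' : Fin n → ℝ := fun r => ∑ a : Fin m × Fin k, ∑ a' : Fin m × Fin k,
    (if a = a' then dv a.1 r else Av a.1 a'.1 r) with hβ2'def
  set γ2' : Fin n → Fin n → ℝ := fun r r' => ∑ a : Fin m × Fin k, ∑ a' : Fin m × Fin k,
    (if a = a' then Bv a.1 r r' else dv a.1 r * dv a'.1 r') with hγ2'def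
  have hT : ∀ a a', ∫ ω, (∑ b, q a b ω) * (∑ b', q a' b' ω) ∂P
      = if a = a' then β2 a.1 else γ2 a.1 a'.1 := by
    intro a a'
    have hstep : ∫ ω, (∑ b, q a b ω) * (∑ b', q a' b' ω) ∂P
        = ∑ b, ∑ b', ∫ ω, q a b ω * q a' b' ω ∂P := by
      have h1 : ∀ ω : Ω, (∑ b, q a b ω) * (∑ b', q a' b' ω)
          = ∑ b, ∑ b', q a b ω * q a' b' ω := by
        intro ω; rw [Finset.sum_mul_sum]
      calc ∫ ω, (∑ b, q a b ω) * (∑ b', q a' b' ω) ∂P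
          = ∫ ω, ∑ b, ∑ b', q a b ω * q a' b' ω ∂P := by
            apply integral_congr_ae; filter_upwards with ω; exact h1 ω
        _ = ∑ b, ∑ b', ∫ ω, q a b ω * q a' b' ω ∂P := by
            rw [integral_finset_sum _ (fun b _ => integrable_finset_sum _
              (fun b' _ => hqint2 a b a' b'))]
            exact Finset.sum_congr rfl (fun b _ =>
              integral_finset_sum _ (fun b' _ => hqint2 a b a' b'))
    rw [hstep]
    simp only [key]
    by_cases haa : a = a'
    · subst haa; simp [hβ2def]
    · simp [haa, hγ2def]
  have hT' : ∀ b b', ∫ ω, (∑ a, q a b ω) * (∑ a', q a' b' ω) ∂P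
      = if b = b' then β2' b.1 else γ2' b.1 b'.1 := by
    intro b b'
    have hstep : ∫ ω, (∑ a, q a b ω) * (∑ a', q a' b' ω) ∂P
        = ∑ a, ∑ a', ∫ ω, q a b ω * q a' b' ω ∂P := by
      have h1 : ∀ ω : Ω, (∑ a, q a b ω) * (∑ a', q a' b' ω)
          = ∑ a, ∑ a', q a b ω * q a' b' ω := by
        intro ω; rw [Finset.sum_mul_sum]
      calc ∫ ω, (∑ a, q a b ω) * (∑ a', q a' b' ω) ∂P
          = ∫ ω, ∑ a, ∑ a', q a b ω * q a' b' ω ∂P := by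
            apply integral_congr_ae; filter_upwards with ω; exact h1 ω
        _ = ∑ a, ∑ a', ∫ ω, q a b ω * q a' b' ω ∂P := by
            rw [integral_finset_sum _ (fun a _ => integrable_finset_sum _
              (fun a' _ => hqint2 a b a' b'))]
            exact Finset.sum_congr rfl (fun a _ =>
              integral_finset_sum _ (fun a' _ => hqint2 a b a' b'))
    rw [hstep]
    simp only [key]
    by_cases hbb : b = b'
    · subst hbb
      rw [if_pos rfl, hβ2'def]
      apply Finset.sum_congr rfl
      intro a _
      apply Finset.sum_congr rfl
      intro a' _
      by_cases haa : a = a'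
      · subst haa; simp
      · simp [haa]
    · rw [if_neg hbb, hγ2'def]
      apply Finset.sum_congr rfl
      intro a _
      apply Finset.sum_congr rfl
      intro a' _
      by_cases haa : a = a'
      · subst haa; simp [hbb]
      · simp [haa, hbb]
  -- expectation of S10²
  have ES10 : ∫ ω, S10sqB X Y ω ∂P
      = (∑ i, (β2 i - γ2 i i)) / (m * ((n:ℝ) * l)^2) := by
    have hVq : ∀ (i : Fin m) (j : Fin k),
        V10B X Y i j = fun ω => (∑ b : Fin n × Fin l, q (i,j) b ω) / ((n:ℝ) * l) := by
      intro i j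
      funext ω
      rw [V10B]
      congr 1
      rw [Fintype.sum_prod_type]
    have hVm : ∀ (i : Fin m) (j : Fin k), Measurable (V10B X Y i j) := by
      intro i j
      rw [hVq i j]
      exact (Finset.measurable_sum _ (fun b _ => hqm (i,j) b)).div_const _
    have hqsum_b : ∀ (a : Fin m × Fin k) (ω : Ω), |∑ b : Fin n × Fin l, q a b ω| ≤ (n:ℝ) * l := by
      intro a ω
      calc |∑ b : Fin n × Fin l, q a b ω| ≤ ∑ b : Fin n × Fin l, |q a b ω| :=
            Finset.abs_sum_le_sum_abs _ _
        _ ≤ ∑ _b : Fin n × Fin l, (1:ℝ) := Finset.sum_le_sum (fun b _ => hqb a b ω)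
        _ = (n:ℝ) * l := by simp [mul_comm]
    have hVb : ∀ (i : Fin m) (j : Fin k) (ω : Ω), |V10B X Y i j ω| ≤ 1 := by
      intro i j ω
      rw [hVq i j]
      rw [abs_div, abs_of_nonneg (by positivity : (0:ℝ) ≤ (n:ℝ) * l), div_le_one (by positivity)]
      exact hqsum_b (i,j) ω
    have hVint : ∀ (i : Fin m) (j j' : Fin k),
        Integrable (fun ω => V10B X Y i j ω * V10B X Y i j' ω) P := by
      intro i j j'
      apply integrable_of_bound P ((hVm i j).mul (hVm i j')) 1
      intro ω
      rw [Pi.mul_apply, abs_mul]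
      calc |V10B X Y i j ω| * |V10B X Y i j' ω| ≤ 1 * 1 :=
          mul_le_mul (hVb i j ω) (hVb i j' ω) (abs_nonneg _) zero_le_one
        _ = 1 := by ring
    have hVval : ∀ (i : Fin m) (j j' : Fin k),
        ∫ ω, V10B X Y i j ω * V10B X Y i j' ω ∂P
          = if j = j' then β2 i / ((n:ℝ) * l)^2 else γ2 i i / ((n:ℝ) * l)^2 := by
      intro i j j'
      have h1 : ∀ ω : Ω, V10B X Y i j ω * V10B X Y i j' ω
          = ((∑ b, q (i,j) b ω) * (∑ b', q (i,j') b' ω)) / ((n:ℝ) * l)^2 := by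
        intro ω
        rw [hVq i j, hVq i j']
        ring
      calc ∫ ω, V10B X Y i j ω * V10B X Y i j' ω ∂P
          = ∫ ω, ((∑ b, q (i,j) b ω) * (∑ b', q (i,j') b' ω)) / ((n:ℝ) * l)^2 ∂P := by
            apply integral_congr_ae; filter_upwards with ω; exact h1 ω
        _ = (∫ ω, (∑ b, q (i,j) b ω) * (∑ b', q (i,j') b' ω) ∂P) / ((n:ℝ) * l)^2 :=
            integral_div _ _
        _ = _ := by
            rw [hT (i,j) (i,j')]
            by_cases hjj : j = j'
            · subst hjj; simp
            · have hne : ((i,j) : Fin m × Fin k) ≠ (i,j') := by simp [hjj]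
              simp [hjj, hne]
    have hinner : ∀ i : Fin m,
        ∫ ω, ∑ j, (V10B X Y i j ω - (∑ j', V10B X Y i j' ω) / k)^2 ∂P
          = ((k:ℝ) - 1) * (β2 i / ((n:ℝ) * l)^2 - γ2 i i / ((n:ℝ) * l)^2) :=
      fun i => integral_sum_sq_dev P (le_of_lt hk) _ _ _ (hVint i) (hVval i)
    have hdevm : ∀ (i : Fin m) (j : Fin k),
        Measurable (fun ω => (V10B X Y i j ω - (∑ j', V10B X Y i j' ω) / k)^2) := by
      intro i j
      exact ((hVm i j).sub ((Finset.measurable_sum _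
        (fun j' _ => hVm i j')).div_const _)).pow_const 2
    have hdevb : ∀ (i : Fin m) (j : Fin k) (ω : Ω),
        |(V10B X Y i j ω - (∑ j', V10B X Y i j' ω) / k)^2| ≤ 4 := by
      intro i j ω
      have h2 : |∑ j', V10B X Y i j' ω| ≤ (k:ℝ) := by
        calc |∑ j', V10B X Y i j' ω| ≤ ∑ j', |V10B X Y i j' ω| :=
              Finset.abs_sum_le_sum_abs _ _
          _ ≤ ∑ _j' : Fin k, (1:ℝ) := Finset.sum_le_sum (fun j' _ => hVb i j' ω)
          _ = (k:ℝ) := by simp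
      have h3 : |(∑ j', V10B X Y i j' ω) / k| ≤ 1 := by
        rw [abs_div, abs_of_nonneg (le_of_lt hk0), div_le_one hk0]
        exact h2
      have h1 := hVb i j ω
      have h4 : |V10B X Y i j ω - (∑ j', V10B X Y i j' ω) / k| ≤ 2 := by
        calc |V10B X Y i j ω - (∑ j', V10B X Y i j' ω) / k|
            ≤ |V10B X Y i j ω| + |(∑ j', V10B X Y i j' ω) / k| := abs_sub _ _
          _ ≤ 2 := by linarith
      calc |(V10B X Y i j ω - (∑ j', V10B X Y i j' ω) / k)^2|
          = |V10B X Y i j ω - (∑ j', V10B X Y i j' ω) / k|^2 := by rw [← abs_pow]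
        _ ≤ 2^2 := by
            apply pow_le_pow_left₀ (abs_nonneg _) h4
        _ = 4 := by norm_num
    have hdevint : ∀ (i : Fin m),
        Integrable (fun ω => ∑ j, (V10B X Y i j ω - (∑ j', V10B X Y i j' ω) / k)^2) P := by
      intro i
      apply integrable_finset_sum
      intro j _
      exact integrable_of_bound P (hdevm i j) 4 (hdevb i j)
    have hS10pt : ∀ ω : Ω, S10sqB X Y ω
        = ∑ i, (∑ j, (V10B X Y i j ω - (∑ j', V10B X Y i j' ω) / k)^2) / ((m:ℝ) * ((k:ℝ)-1)) := by
      intro ω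
      rw [S10sqB]
      exact Finset.sum_congr rfl (fun i _ => (Finset.sum_div _ _ _).symm)
    calc ∫ ω, S10sqB X Y ω ∂P
        = ∑ i, (∫ ω, ∑ j, (V10B X Y i j ω - (∑ j', V10B X Y i j' ω) / k)^2 ∂P)
            / ((m:ℝ) * ((k:ℝ)-1)) := by
          rw [integral_congr_ae (ae_of_all _ hS10pt)]
          rw [integral_finset_sum _ (fun i _ => (hdevint i).div_const _)]
          exact Finset.sum_congr rfl (fun i _ => integral_div _ _)
      _ = ∑ i, (β2 i - γ2 i i) / ((m:ℝ) * ((n:ℝ) * l)^2) := by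
          apply Finset.sum_congr rfl
          intro i _
          rw [hinner i]
          have hkne : (k:ℝ) - 1 ≠ 0 := by linarith
          field_simp
      _ = (∑ i, (β2 i - γ2 i i)) / (m * ((n:ℝ) * l)^2) := by
          rw [← Finset.sum_div]
  -- expectation of S01²
  have ES01 : ∫ ω, S01sqB X Y ω ∂P
      = (∑ r, (β2' r - γ2' r r)) / (n * ((m:ℝ) * k)^2) := by
    have hVq : ∀ (r : Fin n) (s : Fin l),
        V01B X Y r s = fun ω => (∑ a : Fin m × Fin k, q a (r,s) ω) / ((m:ℝ) * k) := by
      intro r s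
      funext ω
      rw [V01B]
      congr 1
      rw [Fintype.sum_prod_type]
    have hVm : ∀ (r : Fin n) (s : Fin l), Measurable (V01B X Y r s) := by
      intro r s
      rw [hVq r s]
      exact (Finset.measurable_sum _ (fun a _ => hqm a (r,s))).div_const _
    have hqsum_a : ∀ (b : Fin n × Fin l) (ω : Ω), |∑ a : Fin m × Fin k, q a b ω| ≤ (m:ℝ) * k := by
      intro b ω
      calc |∑ a : Fin m × Fin k, q a b ω| ≤ ∑ a : Fin m × Fin k, |q a b ω| :=
            Finset.abs_sum_le_sum_abs _ _
        _ ≤ ∑ _a : Fin m × Fin k, (1:ℝ) := Finset.sum_le_sum (fun a _ => hqb a b ω)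
        _ = (m:ℝ) * k := by simp [mul_comm]
    have hVb : ∀ (r : Fin n) (s : Fin l) (ω : Ω), |V01B X Y r s ω| ≤ 1 := by
      intro r s ω
      rw [hVq r s]
      rw [abs_div, abs_of_nonneg (by positivity : (0:ℝ) ≤ (m:ℝ) * k), div_le_one (by positivity)]
      exact hqsum_a (r,s) ω
    have hVint : ∀ (r : Fin n) (s s' : Fin l),
        Integrable (fun ω => V01B X Y r s ω * V01B X Y r s' ω) P := by
      intro r s s'
      apply integrable_of_bound P ((hVm r s).mul (hVm r s')) 1
      intro ω
      rw [Pi.mul_apply, abs_mul]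
      calc |V01B X Y r s ω| * |V01B X Y r s' ω| ≤ 1 * 1 :=
          mul_le_mul (hVb r s ω) (hVb r s' ω) (abs_nonneg _) zero_le_one
        _ = 1 := by ring
    have hVval : ∀ (r : Fin n) (s s' : Fin l),
        ∫ ω, V01B X Y r s ω * V01B X Y r s' ω ∂P
          = if s = s' then β2' r / ((m:ℝ) * k)^2 else γ2' r r / ((m:ℝ) * k)^2 := by
      intro r s s'
      have h1 : ∀ ω : Ω, V01B X Y r s ω * V01B X Y r s' ω
          = ((∑ a, q a (r,s) ω) * (∑ a', q a' (r,s') ω)) / ((m:ℝ) * k)^2 := by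
        intro ω
        rw [hVq r s, hVq r s']
        ring
      calc ∫ ω, V01B X Y r s ω * V01B X Y r s' ω ∂P
          = ∫ ω, ((∑ a, q a (r,s) ω) * (∑ a', q a' (r,s') ω)) / ((m:ℝ) * k)^2 ∂P := by
            apply integral_congr_ae; filter_upwards with ω; exact h1 ω
        _ = (∫ ω, (∑ a, q a (r,s) ω) * (∑ a', q a' (r,s') ω) ∂P) / ((m:ℝ) * k)^2 :=
            integral_div _ _
        _ = _ := by
            rw [hT' (r,s) (r,s')]
            by_cases hss : s = s'
            · subst hss; simp
            · have hne : ((r,s) : Fin n × Fin l) ≠ (r,s') := by simp [hss]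
              simp [hss, hne]
    have hinner : ∀ r : Fin n,
        ∫ ω, ∑ s, (V01B X Y r s ω - (∑ s', V01B X Y r s' ω) / l)^2 ∂P
          = ((l:ℝ) - 1) * (β2' r / ((m:ℝ) * k)^2 - γ2' r r / ((m:ℝ) * k)^2) :=
      fun r => integral_sum_sq_dev P (le_of_lt hl) _ _ _ (hVint r) (hVval r)
    have hdevm : ∀ (r : Fin n) (s : Fin l),
        Measurable (fun ω => (V01B X Y r s ω - (∑ s', V01B X Y r s' ω) / l)^2) := by
      intro r s
      exact ((hVm r s).sub ((Finset.measurable_sum _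
        (fun s' _ => hVm r s')).div_const _)).pow_const 2
    have hdevb : ∀ (r : Fin n) (s : Fin l) (ω : Ω),
        |(V01B X Y r s ω - (∑ s', V01B X Y r s' ω) / l)^2| ≤ 4 := by
      intro r s ω
      have h2 : |∑ s', V01B X Y r s' ω| ≤ (l:ℝ) := by
        calc |∑ s', V01B X Y r s' ω| ≤ ∑ s', |V01B X Y r s' ω| :=
              Finset.abs_sum_le_sum_abs _ _
          _ ≤ ∑ _s' : Fin l, (1:ℝ) := Finset.sum_le_sum (fun s' _ => hVb r s' ω)
          _ = (l:ℝ) := by simp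
      have h3 : |(∑ s', V01B X Y r s' ω) / l| ≤ 1 := by
        rw [abs_div, abs_of_nonneg (le_of_lt hl0), div_le_one hl0]
        exact h2
      have h1 := hVb r s ω
      have h4 : |V01B X Y r s ω - (∑ s', V01B X Y r s' ω) / l| ≤ 2 := by
        calc |V01B X Y r s ω - (∑ s', V01B X Y r s' ω) / l|
            ≤ |V01B X Y r s ω| + |(∑ s', V01B X Y r s' ω) / l| := abs_sub _ _
          _ ≤ 2 := by linarith
      calc |(V01B X Y r s ω - (∑ s', V01B X Y r s' ω) / l)^2|
          = |V01B X Y r s ω - (∑ s', V01B X Y r s' ω) / l|^2 := by rw [← abs_pow]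
        _ ≤ 2^2 := by
            apply pow_le_pow_left₀ (abs_nonneg _) h4
        _ = 4 := by norm_num
    have hdevint : ∀ (r : Fin n),
        Integrable (fun ω => ∑ s, (V01B X Y r s ω - (∑ s', V01B X Y r s' ω) / l)^2) P := by
      intro r
      apply integrable_finset_sum
      intro s _
      exact integrable_of_bound P (hdevm r s) 4 (hdevb r s)
    have hS01pt : ∀ ω : Ω, S01sqB X Y ω
        = ∑ r, (∑ s, (V01B X Y r s ω - (∑ s', V01B X Y r s' ω) / l)^2) / ((n:ℝ) * ((l:ℝ)-1)) := by
      intro ω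
      rw [S01sqB]
      exact Finset.sum_congr rfl (fun r _ => (Finset.sum_div _ _ _).symm)
    calc ∫ ω, S01sqB X Y ω ∂P
        = ∑ r, (∫ ω, ∑ s, (V01B X Y r s ω - (∑ s', V01B X Y r s' ω) / l)^2 ∂P)
            / ((n:ℝ) * ((l:ℝ)-1)) := by
          rw [integral_congr_ae (ae_of_all _ hS01pt)]
          rw [integral_finset_sum _ (fun r _ => (hdevint r).div_const _)]
          exact Finset.sum_congr rfl (fun r _ => integral_div _ _)
      _ = ∑ r, (β2' r - γ2' r r) / ((n:ℝ) * ((m:ℝ) * k)^2) := by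
          apply Finset.sum_congr rfl
          intro r _
          rw [hinner r]
          have hlne : (l:ℝ) - 1 ≠ 0 := by linarith
          field_simp
      _ = (∑ r, (β2' r - γ2' r r)) / (n * ((m:ℝ) * k)^2) := by
          rw [← Finset.sum_div]
  -- expectation of δ̂ and δ̂²
  have hδq : deltaHatB X Y = fun ω =>
      (∑ a : Fin m × Fin k, ∑ b : Fin n × Fin l, q a b ω) / ((m:ℝ) * k * n * l) := by
    funext ω
    rw [deltaHatB]
    congr 1
    rw [Fintype.sum_prod_type]
    apply Finset.sum_congr rfl
    intro i _
    apply Finset.sum_congr rfl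
    intro j _
    rw [Fintype.sum_prod_type]
  have hδm : Measurable (deltaHatB X Y) := by
    rw [hδq]
    exact (Finset.measurable_sum _ (fun a _ =>
      Finset.measurable_sum _ (fun b _ => hqm a b))).div_const _
  have hWb : ∀ (a : Fin m × Fin k) (ω : Ω), |∑ b : Fin n × Fin l, q a b ω| ≤ (n:ℝ) * l := by
    intro a ω
    calc |∑ b : Fin n × Fin l, q a b ω| ≤ ∑ b : Fin n × Fin l, |q a b ω| :=
          Finset.abs_sum_le_sum_abs _ _
      _ ≤ ∑ _b : Fin n × Fin l, (1:ℝ) := Finset.sum_le_sum (fun b _ => hqb a b ω)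
      _ = (n:ℝ) * l := by simp [mul_comm]
  have hδb : ∀ ω, |deltaHatB X Y ω| ≤ 1 := by
    intro ω
    rw [hδq]
    rw [abs_div, abs_of_nonneg (by positivity : (0:ℝ) ≤ (m:ℝ) * k * n * l),
      div_le_one (by positivity)]
    calc |∑ a : Fin m × Fin k, ∑ b : Fin n × Fin l, q a b ω|
        ≤ ∑ a : Fin m × Fin k, |∑ b : Fin n × Fin l, q a b ω| :=
          Finset.abs_sum_le_sum_abs _ _
      _ ≤ ∑ _a : Fin m × Fin k, ((n:ℝ) * l) := Finset.sum_le_sum (fun a _ => hWb a ω)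
      _ = (m:ℝ) * k * n * l := by
          simp [Finset.sum_const]
          push_cast
          ring
  have hδint : Integrable (deltaHatB X Y) P := integrable_of_bound P hδm 1 hδb
  have hδ2int : Integrable (fun ω => (deltaHatB X Y ω)^2) P := by
    apply integrable_of_bound P (hδm.pow_const 2) 1
    intro ω
    rw [abs_pow]
    calc |deltaHatB X Y ω|^2 ≤ 1^2 := pow_le_pow_left₀ (abs_nonneg _) (hδb ω) 2
      _ = 1 := one_pow 2
  have Em : ∫ ω, deltaHatB X Y ω ∂P = (∑ i, ∑ r, dv i r) / (m * n) := by
    rw [hδq, integral_div]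
    rw [integral_finset_sum _ (fun a _ => integrable_finset_sum _ (fun b _ => hqint a b))]
    have h1 : ∀ a : Fin m × Fin k, ∫ ω, ∑ b : Fin n × Fin l, q a b ω ∂P
        = (l:ℝ) * ∑ r, dv a.1 r := by
      intro a
      rw [integral_finset_sum _ (fun b _ => hqint a b)]
      simp only [E1]
      exact sum_fst_fin (fun r => dv a.1 r)
    calc (∑ a : Fin m × Fin k, ∫ ω, ∑ b : Fin n × Fin l, q a b ω ∂P) / ((m:ℝ) * k * n * l)
        = (∑ a : Fin m × Fin k, ((l:ℝ) * ∑ r, dv a.1 r)) / ((m:ℝ) * k * n * l) := by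
          rw [Finset.sum_congr rfl (fun a _ => h1 a)]
      _ = ((k:ℝ) * ∑ i, ((l:ℝ) * ∑ r, dv i r)) / ((m:ℝ) * k * n * l) := by
          rw [sum_fst_fin (fun i => (l:ℝ) * ∑ r, dv i r)]
      _ = (∑ i, ∑ r, dv i r) / ((m:ℝ) * n) := by
          rw [← Finset.mul_sum]
          field_simp
  have Ed2 : ∫ ω, (deltaHatB X Y ω)^2 ∂P
      = ((k:ℝ) * (∑ i, β2 i) + (k:ℝ)^2 * (∑ i, ∑ i', γ2 i i') - (k:ℝ) * (∑ i, γ2 i i))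
        / ((m:ℝ) * k * n * l)^2 := by
    have hWm : ∀ a : Fin m × Fin k, Measurable (fun ω => ∑ b : Fin n × Fin l, q a b ω) :=
      fun a => Finset.measurable_sum _ (fun b _ => hqm a b)
    have hWint : ∀ a a' : Fin m × Fin k, Integrable (fun ω =>
        (∑ b : Fin n × Fin l, q a b ω) * (∑ b' : Fin n × Fin l, q a' b' ω)) P := by
      intro a a'
      apply integrable_of_bound P ((hWm a).mul (hWm a')) (((n:ℝ)*l)*((n:ℝ)*l))
      intro ω
      rw [Pi.mul_apply, abs_mul]
      exact mul_le_mul (hWb a ω) (hWb a' ω) (abs_nonneg _) (by positivity)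
    have hpt : ∀ ω : Ω, (deltaHatB X Y ω)^2
        = (∑ a : Fin m × Fin k, ∑ a' : Fin m × Fin k,
            (∑ b, q a b ω) * (∑ b', q a' b' ω)) / ((m:ℝ) * k * n * l)^2 := by
      intro ω
      rw [hδq]
      rw [div_pow, ← Finset.sum_mul_sum]
      ring_nf
    calc ∫ ω, (deltaHatB X Y ω)^2 ∂P
        = (∑ a : Fin m × Fin k, ∑ a' : Fin m × Fin k,
            ∫ ω, (∑ b, q a b ω) * (∑ b', q a' b' ω) ∂P) / ((m:ℝ) * k * n * l)^2 := by
          rw [integral_congr_ae (ae_of_all _ hpt), integral_div,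
            integral_finset_sum _ (fun a _ => integrable_finset_sum _ (fun a' _ => hWint a a'))]
          congr 1
          exact Finset.sum_congr rfl (fun a _ =>
            integral_finset_sum _ (fun a' _ => hWint a a'))
      _ = _ := by
          congr 1
          simp only [hT]
          rw [sum_ite_diag (fun a : Fin m × Fin k => β2 a.1)
            (fun a a' : Fin m × Fin k => γ2 a.1 a'.1)]
          have e1 : ∑ a : Fin m × Fin k, β2 a.1 = (k:ℝ) * ∑ i, β2 i := sum_fst_fin _
          have e2 : ∑ a : Fin m × Fin k, γ2 a.1 a.1 = (k:ℝ) * ∑ i, γ2 i i :=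
            sum_fst_fin (fun i => γ2 i i)
          have e3 : ∑ a : Fin m × Fin k, ∑ a' : Fin m × Fin k, γ2 a.1 a'.1
              = (k:ℝ)^2 * ∑ i, ∑ i', γ2 i i' := by
            have h1 : ∀ a : Fin m × Fin k, ∑ a' : Fin m × Fin k, γ2 a.1 a'.1
                = (k:ℝ) * ∑ i', γ2 a.1 i' := fun a => sum_fst_fin _
            calc ∑ a : Fin m × Fin k, ∑ a' : Fin m × Fin k, γ2 a.1 a'.1
                = ∑ a : Fin m × Fin k, ((k:ℝ) * ∑ i', γ2 a.1 i') :=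
                  Finset.sum_congr rfl (fun a _ => h1 a)
              _ = (k:ℝ) * ∑ i, ((k:ℝ) * ∑ i', γ2 i i') :=
                  sum_fst_fin (fun i => (k:ℝ) * ∑ i', γ2 i i')
              _ = (k:ℝ)^2 * ∑ i, ∑ i', γ2 i i' := by
                  rw [← Finset.mul_sum]
                  ring
          rw [e1, e2, e3]
          ring
  have hvar : variance (fun ω =>
        Real.sqrt (((m : ℝ) * k * n * l) / ((m:ℝ) * k + n * l)) * (deltaHatB X Y ω - δ₀)) P
      = (((m:ℝ) * k * n * l) / ((m:ℝ) * k + n * l)) *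
        ((∫ ω, (deltaHatB X Y ω)^2 ∂P) - δ₀^2) := by
    set c0 : ℝ := Real.sqrt (((m : ℝ) * k * n * l) / ((m:ℝ) * k + n * l)) with hc0def
    have hc0 : c0^2 = ((m : ℝ) * k * n * l) / ((m:ℝ) * k + n * l) :=
      Real.sq_sqrt (by positivity)
    have hXm : Measurable (fun ω => c0 * (deltaHatB X Y ω - δ₀)) :=
      (hδm.sub measurable_const).const_mul c0
    have hmem : MemLp (fun ω => c0 * (deltaHatB X Y ω - δ₀)) 2 P := by
      apply MemLp.of_bound hXm.aestronglyMeasurable (|c0| * (1 + |δ₀|))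
      filter_upwards with ω
      rw [Real.norm_eq_abs, abs_mul]
      apply mul_le_mul_of_nonneg_left _ (abs_nonneg c0)
      calc |deltaHatB X Y ω - δ₀| ≤ |deltaHatB X Y ω| + |δ₀| := abs_sub _ _
        _ ≤ 1 + |δ₀| := by linarith [hδb ω]
    rw [variance_eq_sub hmem]
    have h1 : (∫ ω, ((fun ω => c0 * (deltaHatB X Y ω - δ₀)) ^ 2) ω ∂P)
        = c0^2 * ((∫ ω, (deltaHatB X Y ω)^2 ∂P) - 2 * δ₀ * (∫ ω, deltaHatB X Y ω ∂P) + δ₀^2) := by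
      have hpt : ∀ ω : Ω, ((fun ω => c0 * (deltaHatB X Y ω - δ₀)) ^ 2) ω
          = c0^2 * ((deltaHatB X Y ω)^2 - 2 * δ₀ * deltaHatB X Y ω + δ₀^2) := by
        intro ω
        simp only [Pi.pow_apply]
        ring
      rw [integral_congr_ae (ae_of_all _ hpt), integral_const_mul]
      congr 1
      have hint3 : Integrable (fun ω => (deltaHatB X Y ω)^2 - 2 * δ₀ * deltaHatB X Y ω) P :=
        hδ2int.sub (hδint.const_mul _)
      have hint4 : Integrable (fun ω => 2 * δ₀ * deltaHatB X Y ω) P := hδint.const_mul _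
      rw [integral_add hint3 (integrable_const _), integral_sub hδ2int hint4,
        integral_const_mul, integral_const]
      simp
    have h2 : (∫ ω, (fun ω => c0 * (deltaHatB X Y ω - δ₀)) ω ∂P)
        = c0 * ((∫ ω, deltaHatB X Y ω ∂P) - δ₀) := by
      simp only
      rw [integral_const_mul, integral_sub hδint (integrable_const _), integral_const]
      simp
    have hEδ : ∫ ω, deltaHatB X Y ω ∂P = δ₀ := by rw [Em, ← hs1]
    calc _ = (∫ ω, ((fun ω => c0 * (deltaHatB X Y ω - δ₀)) ^ 2) ω ∂P)
          - (∫ ω, (fun ω => c0 * (deltaHatB X Y ω - δ₀)) ω ∂P)^2 := rfl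
      _ = _ := by
          rw [h1, h2, hEδ, hc0]
          ring
  have hV10m : ∀ (i : Fin m) (j : Fin k), Measurable (V10B X Y i j) := by
    intro i j
    show Measurable fun ω => (∑ r, ∑ s, phi (X i j ω) (Y r s ω)) / ((n:ℝ) * (l:ℝ))
    exact (Finset.measurable_sum _ (fun r _ => Finset.measurable_sum _
      (fun s _ => measurable_phi_comp (measX i j) (measY r s)))).div_const _
  have hV01m : ∀ (r : Fin n) (s : Fin l), Measurable (V01B X Y r s) := by
    intro r s
    show Measurable fun ω => (∑ i, ∑ j, phi (X i j ω) (Y r s ω)) / ((m:ℝ) * (k:ℝ))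
    exact (Finset.measurable_sum _ (fun i _ => Finset.measurable_sum _
      (fun j _ => measurable_phi_comp (measX i j) (measY r s)))).div_const _
  have hV10b : ∀ (i : Fin m) (j : Fin k) (ω : Ω), |V10B X Y i j ω| ≤ 1 := by
    intro i j ω
    show |(∑ r, ∑ s, phi (X i j ω) (Y r s ω)) / ((n:ℝ) * (l:ℝ))| ≤ 1
    rw [abs_div, abs_of_nonneg (by positivity : (0:ℝ) ≤ (n:ℝ) * (l:ℝ)),
      div_le_one (by positivity)]
    calc |∑ r, ∑ s, phi (X i j ω) (Y r s ω)| ≤ ∑ r, |∑ s, phi (X i j ω) (Y r s ω)| :=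
          Finset.abs_sum_le_sum_abs _ _
      _ ≤ ∑ _r : Fin n, (l:ℝ) := by
          apply Finset.sum_le_sum
          intro r _
          calc |∑ s, phi (X i j ω) (Y r s ω)| ≤ ∑ s, |phi (X i j ω) (Y r s ω)| :=
                Finset.abs_sum_le_sum_abs _ _
            _ ≤ ∑ _s : Fin l, (1:ℝ) := Finset.sum_le_sum (fun s _ => abs_phi_le_one _ _)
            _ = (l:ℝ) := by simp
      _ = (n:ℝ) * (l:ℝ) := by simp
  have hV01b : ∀ (r : Fin n) (s : Fin l) (ω : Ω), |V01B X Y r s ω| ≤ 1 := by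
    intro r s ω
    show |(∑ i, ∑ j, phi (X i j ω) (Y r s ω)) / ((m:ℝ) * (k:ℝ))| ≤ 1
    rw [abs_div, abs_of_nonneg (by positivity : (0:ℝ) ≤ (m:ℝ) * (k:ℝ)),
      div_le_one (by positivity)]
    calc |∑ i, ∑ j, phi (X i j ω) (Y r s ω)| ≤ ∑ i, |∑ j, phi (X i j ω) (Y r s ω)| :=
          Finset.abs_sum_le_sum_abs _ _
      _ ≤ ∑ _i : Fin m, (k:ℝ) := by
          apply Finset.sum_le_sum
          intro i _
          calc |∑ j, phi (X i j ω) (Y r s ω)| ≤ ∑ j, |phi (X i j ω) (Y r s ω)| :=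
                Finset.abs_sum_le_sum_abs _ _
            _ ≤ ∑ _j : Fin k, (1:ℝ) := Finset.sum_le_sum (fun j _ => abs_phi_le_one _ _)
            _ = (k:ℝ) := by simp
      _ = (m:ℝ) * (k:ℝ) := by simp
  have hS10int : Integrable (S10sqB X Y) P := by
    have hmk1 : (0:ℝ) < (m:ℝ) * ((k:ℝ) - 1) := by
      apply mul_pos hm0; linarith
    have hmeas : Measurable (S10sqB X Y) := by
      show Measurable fun ω => ∑ i, ∑ j,
        (V10B X Y i j ω - (∑ j', V10B X Y i j' ω) / k) ^ 2 / ((m:ℝ) * ((k:ℝ) - 1))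
      apply Finset.measurable_sum
      intro i _
      apply Finset.measurable_sum
      intro j _
      exact (((hV10m i j).sub ((Finset.measurable_sum _
        (fun j' _ => hV10m i j')).div_const _)).pow_const 2).div_const _
    apply integrable_of_bound P hmeas ((m:ℝ) * (k:ℝ) * (4 / ((m:ℝ) * ((k:ℝ) - 1))))
    intro ω
    have hterm : ∀ (i : Fin m) (j : Fin k),
        |(V10B X Y i j ω - (∑ j', V10B X Y i j' ω) / k) ^ 2 / ((m:ℝ) * ((k:ℝ) - 1))|
          ≤ 4 / ((m:ℝ) * ((k:ℝ) - 1)) := by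
      intro i j
      rw [abs_div, abs_of_nonneg hmk1.le, div_le_div_iff_of_pos_right hmk1]
      rw [abs_pow]
      have h3 : |(∑ j', V10B X Y i j' ω) / k| ≤ 1 := by
        rw [abs_div, abs_of_nonneg hk0.le, div_le_one hk0]
        calc |∑ j', V10B X Y i j' ω| ≤ ∑ j', |V10B X Y i j' ω| :=
              Finset.abs_sum_le_sum_abs _ _
          _ ≤ ∑ _j' : Fin k, (1:ℝ) := Finset.sum_le_sum (fun j' _ => hV10b i j' ω)
          _ = (k:ℝ) := by simp
      have h4 : |V10B X Y i j ω - (∑ j', V10B X Y i j' ω) / k| ≤ 2 := by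
        calc |V10B X Y i j ω - (∑ j', V10B X Y i j' ω) / k|
            ≤ |V10B X Y i j ω| + |(∑ j', V10B X Y i j' ω) / k| := abs_sub _ _
          _ ≤ 2 := by linarith [hV10b i j ω]
      calc |V10B X Y i j ω - (∑ j', V10B X Y i j' ω) / k| ^ 2 ≤ 2 ^ 2 :=
            pow_le_pow_left₀ (abs_nonneg _) h4 2
        _ = 4 := by norm_num
    show |∑ i, ∑ j, (V10B X Y i j ω - (∑ j', V10B X Y i j' ω) / k) ^ 2
        / ((m:ℝ) * ((k:ℝ) - 1))| ≤ _
    calc |∑ i, ∑ j, (V10B X Y i j ω - (∑ j', V10B X Y i j' ω) / k) ^ 2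
          / ((m:ℝ) * ((k:ℝ) - 1))|
        ≤ ∑ i, |∑ j, (V10B X Y i j ω - (∑ j', V10B X Y i j' ω) / k) ^ 2
          / ((m:ℝ) * ((k:ℝ) - 1))| := Finset.abs_sum_le_sum_abs _ _
      _ ≤ ∑ _i : Fin m, ((k:ℝ) * (4 / ((m:ℝ) * ((k:ℝ) - 1)))) := by
          apply Finset.sum_le_sum
          intro i _
          calc |∑ j, (V10B X Y i j ω - (∑ j', V10B X Y i j' ω) / k) ^ 2
              / ((m:ℝ) * ((k:ℝ) - 1))|
              ≤ ∑ j, |(V10B X Y i j ω - (∑ j', V10B X Y i j' ω) / k) ^ 2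
                / ((m:ℝ) * ((k:ℝ) - 1))| := Finset.abs_sum_le_sum_abs _ _
            _ ≤ ∑ _j : Fin k, (4 / ((m:ℝ) * ((k:ℝ) - 1))) :=
                Finset.sum_le_sum (fun j _ => hterm i j)
            _ = (k:ℝ) * (4 / ((m:ℝ) * ((k:ℝ) - 1))) := by simp
      _ = (m:ℝ) * (k:ℝ) * (4 / ((m:ℝ) * ((k:ℝ) - 1))) := by
          simp
          ring
  have hS01int : Integrable (S01sqB X Y) P := by
    have hnl1 : (0:ℝ) < (n:ℝ) * ((l:ℝ) - 1) := by
      apply mul_pos hn0; linarith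
    have hmeas : Measurable (S01sqB X Y) := by
      show Measurable fun ω => ∑ r, ∑ s,
        (V01B X Y r s ω - (∑ s', V01B X Y r s' ω) / l) ^ 2 / ((n:ℝ) * ((l:ℝ) - 1))
      apply Finset.measurable_sum
      intro r _
      apply Finset.measurable_sum
      intro s _
      exact (((hV01m r s).sub ((Finset.measurable_sum _
        (fun s' _ => hV01m r s')).div_const _)).pow_const 2).div_const _
    apply integrable_of_bound P hmeas ((n:ℝ) * (l:ℝ) * (4 / ((n:ℝ) * ((l:ℝ) - 1))))
    intro ω
    have hterm : ∀ (r : Fin n) (s : Fin l),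
        |(V01B X Y r s ω - (∑ s', V01B X Y r s' ω) / l) ^ 2 / ((n:ℝ) * ((l:ℝ) - 1))|
          ≤ 4 / ((n:ℝ) * ((l:ℝ) - 1)) := by
      intro r s
      rw [abs_div, abs_of_nonneg hnl1.le, div_le_div_iff_of_pos_right hnl1]
      rw [abs_pow]
      have h3 : |(∑ s', V01B X Y r s' ω) / l| ≤ 1 := by
        rw [abs_div, abs_of_nonneg hl0.le, div_le_one hl0]
        calc |∑ s', V01B X Y r s' ω| ≤ ∑ s', |V01B X Y r s' ω| :=
              Finset.abs_sum_le_sum_abs _ _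
          _ ≤ ∑ _s' : Fin l, (1:ℝ) := Finset.sum_le_sum (fun s' _ => hV01b r s' ω)
          _ = (l:ℝ) := by simp
      have h4 : |V01B X Y r s ω - (∑ s', V01B X Y r s' ω) / l| ≤ 2 := by
        calc |V01B X Y r s ω - (∑ s', V01B X Y r s' ω) / l|
            ≤ |V01B X Y r s ω| + |(∑ s', V01B X Y r s' ω) / l| := abs_sub _ _
          _ ≤ 2 := by linarith [hV01b r s ω]
      calc |V01B X Y r s ω - (∑ s', V01B X Y r s' ω) / l| ^ 2 ≤ 2 ^ 2 :=
            pow_le_pow_left₀ (abs_nonneg _) h4 2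
        _ = 4 := by norm_num
    show |∑ r, ∑ s, (V01B X Y r s ω - (∑ s', V01B X Y r s' ω) / l) ^ 2
        / ((n:ℝ) * ((l:ℝ) - 1))| ≤ _
    calc |∑ r, ∑ s, (V01B X Y r s ω - (∑ s', V01B X Y r s' ω) / l) ^ 2
          / ((n:ℝ) * ((l:ℝ) - 1))|
        ≤ ∑ r, |∑ s, (V01B X Y r s ω - (∑ s', V01B X Y r s' ω) / l) ^ 2
          / ((n:ℝ) * ((l:ℝ) - 1))| := Finset.abs_sum_le_sum_abs _ _
      _ ≤ ∑ _r : Fin n, ((l:ℝ) * (4 / ((n:ℝ) * ((l:ℝ) - 1)))) := by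
          apply Finset.sum_le_sum
          intro r _
          calc |∑ s, (V01B X Y r s ω - (∑ s', V01B X Y r s' ω) / l) ^ 2
              / ((n:ℝ) * ((l:ℝ) - 1))|
              ≤ ∑ s, |(V01B X Y r s ω - (∑ s', V01B X Y r s' ω) / l) ^ 2
                / ((n:ℝ) * ((l:ℝ) - 1))| := Finset.abs_sum_le_sum_abs _ _
            _ ≤ ∑ _s : Fin l, (4 / ((n:ℝ) * ((l:ℝ) - 1))) :=
                Finset.sum_le_sum (fun s _ => hterm r s)
            _ = (l:ℝ) * (4 / ((n:ℝ) * ((l:ℝ) - 1))) := by simp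
      _ = (n:ℝ) * (l:ℝ) * (4 / ((n:ℝ) * ((l:ℝ) - 1))) := by
          simp
          ring
  have ES2 : ∫ ω, S2B X Y ω ∂P
      = (((n:ℝ) * l) * (∫ ω, S10sqB X Y ω ∂P) + ((m:ℝ) * k) * (∫ ω, S01sqB X Y ω ∂P))
        / ((m:ℝ) * k + n * l) := by
    have hpt : ∀ ω : Ω, S2B X Y ω
        = (((n:ℝ) * l) * S10sqB X Y ω + ((m:ℝ) * k) * S01sqB X Y ω)
          / ((m:ℝ) * k + (n:ℝ) * l) := fun ω => rfl
    rw [integral_congr_ae (ae_of_all _ hpt), integral_div,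
      integral_add (hS10int.const_mul _) (hS01int.const_mul _),
      integral_const_mul, integral_const_mul]
  -- decompositions of β2, γ2 into stratum sums
  have hβ2c : ∀ i, β2 i = (l:ℝ) * (∑ r, dv i r)
      + ((l:ℝ)^2 * (∑ r, ∑ r', Bv i r r') - (l:ℝ) * (∑ r, Bv i r r)) := by
    intro i
    have e1 : ∑ b : Fin n × Fin l, dv i b.1 = (l:ℝ) * ∑ r, dv i r := sum_fst_fin _
    have e2 : ∑ b : Fin n × Fin l, Bv i b.1 b.1 = (l:ℝ) * ∑ r, Bv i r r :=
      sum_fst_fin (fun r => Bv i r r)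
    have e3 : ∑ b : Fin n × Fin l, ∑ b' : Fin n × Fin l, Bv i b.1 b'.1
        = (l:ℝ)^2 * ∑ r, ∑ r', Bv i r r' := by
      have h1 : ∀ b : Fin n × Fin l, ∑ b' : Fin n × Fin l, Bv i b.1 b'.1
          = (l:ℝ) * ∑ r', Bv i b.1 r' := fun b => sum_fst_fin _
      calc ∑ b : Fin n × Fin l, ∑ b' : Fin n × Fin l, Bv i b.1 b'.1
          = ∑ b : Fin n × Fin l, ((l:ℝ) * ∑ r', Bv i b.1 r') :=
            Finset.sum_congr rfl (fun b _ => h1 b)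
        _ = (l:ℝ) * ∑ r, ((l:ℝ) * ∑ r', Bv i r r') :=
            sum_fst_fin (fun r => (l:ℝ) * ∑ r', Bv i r r')
        _ = (l:ℝ)^2 * ∑ r, ∑ r', Bv i r r' := by rw [← Finset.mul_sum]; ring
    calc β2 i = ∑ b : Fin n × Fin l, ∑ b' : Fin n × Fin l,
          (if b = b' then dv i b.1 else Bv i b.1 b'.1) := rfl
      _ = ∑ b : Fin n × Fin l, dv i b.1 + ((∑ b : Fin n × Fin l, ∑ b' : Fin n × Fin l,
          Bv i b.1 b'.1) - ∑ b : Fin n × Fin l, Bv i b.1 b.1) :=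
          sum_ite_diag _ _
      _ = _ := by rw [e1, e2, e3]
  have hγ2c : ∀ i i', γ2 i i' = (l:ℝ) * (∑ r, Av i i' r)
      + (((l:ℝ) * ∑ r, dv i r) * ((l:ℝ) * ∑ r, dv i' r)
        - (l:ℝ) * (∑ r, dv i r * dv i' r)) := by
    intro i i'
    have e1 : ∑ b : Fin n × Fin l, Av i i' b.1 = (l:ℝ) * ∑ r, Av i i' r := sum_fst_fin _
    have e2 : ∑ b : Fin n × Fin l, ∑ b' : Fin n × Fin l, dv i b.1 * dv i' b'.1
        = ((l:ℝ) * ∑ r, dv i r) * ((l:ℝ) * ∑ r, dv i' r) := by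
      rw [← Finset.sum_mul_sum]
      rw [sum_fst_fin (fun r => dv i r), sum_fst_fin (fun r => dv i' r)]
    have e3 : ∑ b : Fin n × Fin l, dv i b.1 * dv i' b.1
        = (l:ℝ) * ∑ r, dv i r * dv i' r := sum_fst_fin (fun r => dv i r * dv i' r)
    calc γ2 i i' = ∑ b : Fin n × Fin l, ∑ b' : Fin n × Fin l,
          (if b = b' then Av i i' b.1 else dv i b.1 * dv i' b'.1) := rfl
      _ = ∑ b : Fin n × Fin l, Av i i' b.1 + ((∑ b : Fin n × Fin l, ∑ b' : Fin n × Fin l,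
          dv i b.1 * dv i' b'.1) - ∑ b : Fin n × Fin l, dv i b.1 * dv i' b.1) :=
          sum_ite_diag _ _
      _ = _ := by rw [e1, e2, e3]
  have hβ2'c : ∀ r, β2' r = (k:ℝ) * (∑ i, dv i r)
      + ((k:ℝ)^2 * (∑ i, ∑ i', Av i i' r) - (k:ℝ) * (∑ i, Av i i r)) := by
    intro r
    have e1 : ∑ a : Fin m × Fin k, dv a.1 r = (k:ℝ) * ∑ i, dv i r :=
      sum_fst_fin (fun i => dv i r)
    have e2 : ∑ a : Fin m × Fin k, Av a.1 a.1 r = (k:ℝ) * ∑ i, Av i i r :=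
      sum_fst_fin (fun i => Av i i r)
    have e3 : ∑ a : Fin m × Fin k, ∑ a' : Fin m × Fin k, Av a.1 a'.1 r
        = (k:ℝ)^2 * ∑ i, ∑ i', Av i i' r := by
      have h1 : ∀ a : Fin m × Fin k, ∑ a' : Fin m × Fin k, Av a.1 a'.1 r
          = (k:ℝ) * ∑ i', Av a.1 i' r := fun a => sum_fst_fin (fun i' => Av a.1 i' r)
      calc ∑ a : Fin m × Fin k, ∑ a' : Fin m × Fin k, Av a.1 a'.1 r
          = ∑ a : Fin m × Fin k, ((k:ℝ) * ∑ i', Av a.1 i' r) :=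
            Finset.sum_congr rfl (fun a _ => h1 a)
        _ = (k:ℝ) * ∑ i, ((k:ℝ) * ∑ i', Av i i' r) :=
            sum_fst_fin (fun i => (k:ℝ) * ∑ i', Av i i' r)
        _ = (k:ℝ)^2 * ∑ i, ∑ i', Av i i' r := by rw [← Finset.mul_sum]; ring
    calc β2' r = ∑ a : Fin m × Fin k, ∑ a' : Fin m × Fin k,
          (if a = a' then dv a.1 r else Av a.1 a'.1 r) := rfl
      _ = ∑ a : Fin m × Fin k, dv a.1 r + ((∑ a : Fin m × Fin k, ∑ a' : Fin m × Fin k,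
          Av a.1 a'.1 r) - ∑ a : Fin m × Fin k, Av a.1 a.1 r) :=
          sum_ite_diag _ _
      _ = _ := by rw [e1, e2, e3]
  have hγ2'c : ∀ r r', γ2' r r' = (k:ℝ) * (∑ i, Bv i r r')
      + (((k:ℝ) * ∑ i, dv i r) * ((k:ℝ) * ∑ i, dv i r')
        - (k:ℝ) * (∑ i, dv i r * dv i r')) := by
    intro r r'
    have e1 : ∑ a : Fin m × Fin k, Bv a.1 r r' = (k:ℝ) * ∑ i, Bv i r r' :=
      sum_fst_fin (fun i => Bv i r r')
    have e2 : ∑ a : Fin m × Fin k, ∑ a' : Fin m × Fin k, dv a.1 r * dv a'.1 r'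
        = ((k:ℝ) * ∑ i, dv i r) * ((k:ℝ) * ∑ i, dv i r') := by
      rw [← Finset.sum_mul_sum]
      rw [sum_fst_fin (fun i => dv i r), sum_fst_fin (fun i => dv i r')]
    have e3 : ∑ a : Fin m × Fin k, dv a.1 r * dv a.1 r'
        = (k:ℝ) * ∑ i, dv i r * dv i r' := sum_fst_fin (fun i => dv i r * dv i r')
    calc γ2' r r' = ∑ a : Fin m × Fin k, ∑ a' : Fin m × Fin k,
          (if a = a' then Bv a.1 r r' else dv a.1 r * dv a'.1 r') := rfl
      _ = ∑ a : Fin m × Fin k, Bv a.1 r r' + ((∑ a : Fin m × Fin k, ∑ a' : Fin m × Fin k,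
          dv a.1 r * dv a'.1 r') - ∑ a : Fin m × Fin k, dv a.1 r * dv a.1 r') :=
          sum_ite_diag _ _
      _ = _ := by rw [e1, e2, e3]
  -- primitives
  set s1 : ℝ := ∑ i, ∑ r, dv i r with hs1def
  set s2 : ℝ := ∑ i, ∑ r, (dv i r)^2 with hs2def
  set sB : ℝ := ∑ i, ∑ r, Bv i r r with hsBdef
  set sA : ℝ := ∑ i, ∑ r, Av i i r with hsAdef
  set TB : ℝ := ∑ i, ∑ r, ∑ r', Bv i r r' with hTBdef
  set TA : ℝ := ∑ i, ∑ i', ∑ r, Av i i' r with hTAdef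
  set Uv : ℝ := ∑ i, (∑ r, dv i r)^2 with hUdef
  set Vv : ℝ := ∑ r, (∑ i, dv i r)^2 with hVdef
  have hP1 : ∑ i, β2 i = (l:ℝ) * s1 + ((l:ℝ)^2 * TB - (l:ℝ) * sB) := by
    calc ∑ i, β2 i
        = ∑ i, ((l:ℝ) * (∑ r, dv i r)
          + ((l:ℝ)^2 * (∑ r, ∑ r', Bv i r r') - (l:ℝ) * (∑ r, Bv i r r))) :=
          Finset.sum_congr rfl (fun i _ => hβ2c i)
      _ = (∑ i, (l:ℝ) * (∑ r, dv i r))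
          + ((∑ i, (l:ℝ)^2 * (∑ r, ∑ r', Bv i r r')) - ∑ i, (l:ℝ) * (∑ r, Bv i r r)) :=
          split1 _ _ _
      _ = _ := by
          rw [← Finset.mul_sum, ← Finset.mul_sum, ← Finset.mul_sum, hs1def, hTBdef, hsBdef]
  have hP2 : ∑ i, γ2 i i = (l:ℝ) * sA + ((l:ℝ)^2 * Uv - (l:ℝ) * s2) := by
    have h1 : ∀ i, γ2 i i = (l:ℝ) * (∑ r, Av i i r)
        + ((l:ℝ)^2 * (∑ r, dv i r)^2 - (l:ℝ) * (∑ r, (dv i r)^2)) := by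
      intro i
      rw [hγ2c i i]
      have h2 : ∑ r, dv i r * dv i r = ∑ r, (dv i r)^2 :=
        Finset.sum_congr rfl (fun r _ => by ring)
      rw [h2]
      ring
    calc ∑ i, γ2 i i
        = ∑ i, ((l:ℝ) * (∑ r, Av i i r)
          + ((l:ℝ)^2 * (∑ r, dv i r)^2 - (l:ℝ) * (∑ r, (dv i r)^2))) :=
          Finset.sum_congr rfl (fun i _ => h1 i)
      _ = (∑ i, (l:ℝ) * (∑ r, Av i i r))
          + ((∑ i, (l:ℝ)^2 * (∑ r, dv i r)^2) - ∑ i, (l:ℝ) * (∑ r, (dv i r)^2)) :=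
          split1 _ _ _
      _ = _ := by
          rw [← Finset.mul_sum, ← Finset.mul_sum, ← Finset.mul_sum, hsAdef, hUdef, hs2def]
  have hP3 : ∑ i, ∑ i', γ2 i i' = (l:ℝ) * TA + ((l:ℝ)^2 * s1^2 - (l:ℝ) * Vv) := by
    have h1 : ∀ i i', γ2 i i' = (l:ℝ) * (∑ r, Av i i' r)
        + ((l:ℝ)^2 * ((∑ r, dv i r) * (∑ r, dv i' r))
          - (l:ℝ) * (∑ r, dv i r * dv i' r)) := by
      intro i i'
      rw [hγ2c i i']
      ring
    calc ∑ i, ∑ i', γ2 i i'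
        = ∑ i, ∑ i', ((l:ℝ) * (∑ r, Av i i' r)
          + ((l:ℝ)^2 * ((∑ r, dv i r) * (∑ r, dv i' r))
            - (l:ℝ) * (∑ r, dv i r * dv i' r))) :=
          Finset.sum_congr rfl (fun i _ => Finset.sum_congr rfl (fun i' _ => h1 i i'))
      _ = (∑ i, ∑ i', (l:ℝ) * (∑ r, Av i i' r))
          + ((∑ i, ∑ i', (l:ℝ)^2 * ((∑ r, dv i r) * (∑ r, dv i' r)))
            - ∑ i, ∑ i', (l:ℝ) * (∑ r, dv i r * dv i' r)) := split2 _ _ _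
      _ = _ := by
          rw [mul_sum2, mul_sum2, mul_sum2]
          have e1 : ∑ i, ∑ i', (∑ r, dv i r) * (∑ r, dv i' r) = s1^2 := by
            rw [← Finset.sum_mul_sum, hs1def]
            ring
          have e2 : ∑ i : Fin m, ∑ i' : Fin m, ∑ r, dv i r * dv i' r = Vv := by
            rw [sum_rot (fun i i' r => dv i r * dv i' r), hVdef]
            apply Finset.sum_congr rfl
            intro r _
            rw [← Finset.sum_mul_sum]
            ring
          rw [e1, e2, hTAdef]
  have hQ1 : ∑ r, β2' r = (k:ℝ) * s1 + ((k:ℝ)^2 * TA - (k:ℝ) * sA) := by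
    calc ∑ r, β2' r
        = ∑ r, ((k:ℝ) * (∑ i, dv i r)
          + ((k:ℝ)^2 * (∑ i, ∑ i', Av i i' r) - (k:ℝ) * (∑ i, Av i i r))) :=
          Finset.sum_congr rfl (fun r _ => hβ2'c r)
      _ = (∑ r, (k:ℝ) * (∑ i, dv i r))
          + ((∑ r, (k:ℝ)^2 * (∑ i, ∑ i', Av i i' r)) - ∑ r, (k:ℝ) * (∑ i, Av i i r)) :=
          split1 _ _ _
      _ = _ := by
          rw [← Finset.mul_sum, ← Finset.mul_sum, ← Finset.mul_sum]
          have e1 : ∑ r, ∑ i, dv i r = s1 := by rw [hs1def]; exact Finset.sum_comm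
          have e2 : ∑ r : Fin n, ∑ i : Fin m, ∑ i' : Fin m, Av i i' r = TA := by
            rw [hTAdef, sum_rot (fun i i' r => Av i i' r)]
          have e3 : ∑ r, ∑ i, Av i i r = sA := by rw [hsAdef]; exact Finset.sum_comm
          rw [e1, e2, e3]
  have hQ2 : ∑ r, γ2' r r = (k:ℝ) * sB + ((k:ℝ)^2 * Vv - (k:ℝ) * s2) := by
    have h1 : ∀ r, γ2' r r = (k:ℝ) * (∑ i, Bv i r r)
        + ((k:ℝ)^2 * (∑ i, dv i r)^2 - (k:ℝ) * (∑ i, (dv i r)^2)) := by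
      intro r
      rw [hγ2'c r r]
      have h2 : ∑ i, dv i r * dv i r = ∑ i, (dv i r)^2 :=
        Finset.sum_congr rfl (fun i _ => by ring)
      rw [h2]
      ring
    calc ∑ r, γ2' r r
        = ∑ r, ((k:ℝ) * (∑ i, Bv i r r)
          + ((k:ℝ)^2 * (∑ i, dv i r)^2 - (k:ℝ) * (∑ i, (dv i r)^2))) :=
          Finset.sum_congr rfl (fun r _ => h1 r)
      _ = (∑ r, (k:ℝ) * (∑ i, Bv i r r))
          + ((∑ r, (k:ℝ)^2 * (∑ i, dv i r)^2) - ∑ r, (k:ℝ) * (∑ i, (dv i r)^2)) :=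
          split1 _ _ _
      _ = _ := by
          rw [← Finset.mul_sum, ← Finset.mul_sum, ← Finset.mul_sum]
          have e1 : ∑ r, ∑ i, Bv i r r = sB := by rw [hsBdef]; exact Finset.sum_comm
          have e2 : ∑ r, (∑ i, dv i r)^2 = Vv := hVdef.symm
          have e3 : ∑ r, ∑ i, (dv i r)^2 = s2 := by rw [hs2def]; exact Finset.sum_comm
          rw [e1, e2, e3]
  -- final assembly
  rw [ES2, ES10, ES01, hvar, Ed2, hbeta, halpha, hdb, hs1]
  rw [Finset.sum_sub_distrib, Finset.sum_sub_distrib, hP1, hP2, hP3, hQ1, hQ2]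
  have hden : (m:ℝ) * k + n * l ≠ 0 := by positivity
  field_simp
  ring

end AuxProof
end RSSAUC
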